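/- arXiv:2107.10202 — 10 statements merged into one kernel-verified Lean document; each statement's English description precedes it below -/
import Mathlib

section
/- In a Faigle geometry (P, F) and for u ∈ P and X ∈ F with u ∉ X and {x ∈ P : x < u} ⊆ X, the set Y ∈ F covering X with u ∈ Y (guaranteed by the covering property) is unique. -/
/-- `X` is a down-set of the poset `P`. -/
def IsDownSet {P : Type*} [PartialOrder P] (X : Set P) : Prop :=
  ∀ ⦃x⦄, x ∈ X → ∀ ⦃y⦄, y ≤ x → y ∈ X

/-- `Y` covers `X` in the poset `(F, ⊆)`. -/
def CoversIn {P : Type*} (F : Set (Set P)) (X Y : Set P) : Prop :=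
  X ⊂ Y ∧ ∀ Z ∈ F, ¬(X ⊂ Z ∧ Z ⊂ Y)

/-- `(P, F)` is a Faigle geometry. -/
structure IsFaigle {P : Type*} [PartialOrder P] [Finite P] (F : Set (Set P)) : Prop where
  univ_mem : Set.univ ∈ F
  inter_mem : ∀ X ∈ F, ∀ Y ∈ F, X ∩ Y ∈ F
  down : ∀ X ∈ F, IsDownSet X
  empty_mem : ∅ ∈ F
  Iic_mem : ∀ u : P, Set.Iic u ∈ F
  Iio_mem : ∀ u : P, Set.Iio u ∈ F
  cp : ∀ (u : P), ∀ X ∈ F, u ∉ X → Set.Iio u ⊆ X →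
      ∃ Y ∈ F, u ∈ Y ∧ CoversIn F X Y

/-- The set `Y` guaranteed by the covering property (CP) is unique. -/
theorem faigle_cp_unique {P : Type*} [PartialOrder P] [Finite P] {F : Set (Set P)}
    (hF : IsFaigle F) (u : P) (X : Set P) (hX : X ∈ F) (huX : u ∉ X)
    (hIio : Set.Iio u ⊆ X)
    (Y₁ : Set P) (hY₁F : Y₁ ∈ F) (huY₁ : u ∈ Y₁) (hcov₁ : CoversIn F X Y₁)
    (Y₂ : Set P) (hY₂F : Y₂ ∈ F) (huY₂ : u ∈ Y₂) (hcov₂ : CoversIn F X Y₂) :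
    Y₁ = Y₂ := by
  have hIF : Y₁ ∩ Y₂ ∈ F := hF.inter_mem Y₁ hY₁F Y₂ hY₂F
  have hXI : X ⊂ Y₁ ∩ Y₂ := by
    constructor
    · exact Set.subset_inter hcov₁.1.1 hcov₂.1.1
    · intro h
      exact huX (h ⟨huY₁, huY₂⟩)
  have key : ∀ (Y : Set P), Y ∈ F → CoversIn F X Y → Y₁ ∩ Y₂ ⊆ Y → Y ⊆ Y₁ ∩ Y₂ := by
    intro Y hYF hcov hsub
    by_contra h
    exact hcov.2 (Y₁ ∩ Y₂) hIF ⟨hXI, ⟨hsub, h⟩⟩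
  have h1 := key Y₁ hY₁F hcov₁ Set.inter_subset_left
  have h2 := key Y₂ hY₂F hcov₂ Set.inter_subset_right
  exact subset_antisymm (h1.trans Set.inter_subset_right) (h2.trans Set.inter_subset_left)
end

section
/- Let P be a finite poset and F ⊆ powerset(P) satisfying (F∩), (F↓), and (Pr). Then (P, F) satisfies the covering property (CP) if and only if it satisfies the Faigle exchange property (FEP): for any u, v ∈ P and S ∈ F with u ∉ S, v ∉ S, ⇓u ⊆ S, and v ∈ cl(S ∪ {u}), one has u ∈ cl(S ∪ {v}), where cl(X) = ⋂{Y ∈ F : X ⊆ Y}. -/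
/-- The closure operator associated to the closure system `F`:
`cl(X) = ⋂ {Y ∈ F : X ⊆ Y}`. -/
def clF {P : Type*} (F : Set (Set P)) (X : Set P) : Set P :=
  ⋂₀ {Y | Y ∈ F ∧ X ⊆ Y}

/-!
For `S ∈ F` and `u ∉ S`, every member of `F` containing `S` and `u` contains `cl(S ∪ {u})`, so
this closure is the only possible cover of `S` containing `u`. Hence (CP) fails at `(u, S)` exactly
when some `Z ∈ F` lies strictly between `S` and `cl(S ∪ {u})` and misses `u`. Any `v ∈ Z \ S` then
has `v ∈ cl(S ∪ {u})` but `u ∉ cl(S ∪ {v}) ⊆ Z`, violating (FEP); conversely, a violation of (FEP)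
at `v` makes `cl(S ∪ {u}) ∩ cl(S ∪ {v})` such a `Z`.
-/

section ClosureSystem

variable {P : Type*} {F : Set (Set P)}

lemma sInter_mem_of_finite (univ_mem : Set.univ ∈ F)
    (inter_mem : ∀ X ∈ F, ∀ Y ∈ F, X ∩ Y ∈ F) {G : Set (Set P)} (hG : G.Finite)
    (hGF : G ⊆ F) : ⋂₀ G ∈ F := by
  induction G, hG using Set.Finite.induction_on with
  | empty => simpa using univ_mem
  | @insert Y G _ _ ih =>
    rw [Set.sInter_insert]
    exact inter_mem _ (hGF (Set.mem_insert _ _)) _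
      (ih fun Z hZ => hGF (Set.mem_insert_of_mem _ hZ))

lemma clF_mem [Finite P] (univ_mem : Set.univ ∈ F)
    (inter_mem : ∀ X ∈ F, ∀ Y ∈ F, X ∩ Y ∈ F) (X : Set P) : clF F X ∈ F :=
  sInter_mem_of_finite univ_mem inter_mem (Set.toFinite _) fun _ hY => hY.1

lemma subset_clF (X : Set P) : X ⊆ clF F X :=
  fun _ hx => Set.mem_sInter.2 fun _ hY => hY.2 hx

lemma clF_subset {X Y : Set P} (hY : Y ∈ F) (hXY : X ⊆ Y) : clF F X ⊆ Y :=
  Set.sInter_subset_of_mem ⟨hY, hXY⟩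

lemma subset_clF_union_singleton (X : Set P) (u : P) : X ⊆ clF F (X ∪ {u}) :=
  Set.subset_union_left.trans (subset_clF _)

lemma mem_clF_union_singleton (X : Set P) (u : P) : u ∈ clF F (X ∪ {u}) :=
  subset_clF _ (Set.mem_union_right _ rfl)

lemma clF_union_singleton_subset {X Y : Set P} {u : P} (hY : Y ∈ F) (hXY : X ⊆ Y)
    (hu : u ∈ Y) : clF F (X ∪ {u}) ⊆ Y :=
  clF_subset hY (Set.union_subset hXY (Set.singleton_subset_iff.2 hu))

end ClosureSystem

section Exchange

variable {P : Type*} [Preorder P]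

def CoveringProperty (F : Set (Set P)) : Prop :=
  ∀ (u : P), ∀ X ∈ F, u ∉ X → Set.Iio u ⊆ X → ∃ Y ∈ F, u ∈ Y ∧ CoversIn F X Y

def FaigleExchange (F : Set (Set P)) : Prop :=
  ∀ (u v : P), ∀ S ∈ F, u ∉ S → v ∉ S → Set.Iio u ⊆ S →
    v ∈ clF F (S ∪ {u}) → u ∈ clF F (S ∪ {v})

variable {F : Set (Set P)}

theorem CoveringProperty.faigleExchange (inter_mem : ∀ X ∈ F, ∀ Y ∈ F, X ∩ Y ∈ F)
    (hcl : ∀ X, clF F X ∈ F) (cp : CoveringProperty F) : FaigleExchange F := by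
  intro u v S hS huS hvS hio hv
  by_contra hu
  obtain ⟨Y, hYF, huY, ⟨hSY, -⟩, hcov⟩ := cp u S hS huS hio
  have hvY : v ∈ Y := clF_union_singleton_subset hYF hSY huY hv
  set B := clF F (S ∪ {v})
  have hSB : S ⊆ B := subset_clF_union_singleton S v
  have hvB : v ∈ B := mem_clF_union_singleton S v
  refine hcov (Y ∩ B) (inter_mem _ hYF _ (hcl _)) ⟨?_, ?_⟩
  · exact ⟨Set.subset_inter hSY hSB, fun h => hvS (h ⟨hvY, hvB⟩)⟩
  · exact ⟨Set.inter_subset_left, fun h => hu (h huY).2⟩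

theorem FaigleExchange.coveringProperty (hcl : ∀ X, clF F X ∈ F)
    (fep : FaigleExchange F) : CoveringProperty F := by
  intro u X hX huX hio
  refine ⟨clF F (X ∪ {u}), hcl _, mem_clF_union_singleton X u,
    ⟨subset_clF_union_singleton X u, fun h => huX (h (mem_clF_union_singleton X u))⟩, ?_⟩
  rintro Z hZ ⟨⟨hXZ, hZX⟩, hZY, hZ_ne⟩
  have huZ : u ∉ Z := fun h => hZ_ne (clF_union_singleton_subset hZ hXZ h)
  obtain ⟨v, hvZ, hvX⟩ := Set.exists_of_ssubset ⟨hXZ, hZX⟩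
  exact huZ (clF_union_singleton_subset hZ hXZ hvZ (fep u v X hX huX hvX hio (hZY hvZ)))

end Exchange

theorem cp_iff_fep_general {P : Type*} [PartialOrder P] [Finite P] (F : Set (Set P))
    (univ_mem : Set.univ ∈ F)
    (inter_mem : ∀ X ∈ F, ∀ Y ∈ F, X ∩ Y ∈ F) :
    (∀ (u : P), ∀ X ∈ F, u ∉ X → Set.Iio u ⊆ X →
        ∃ Y ∈ F, u ∈ Y ∧ CoversIn F X Y)
      ↔
    (∀ (u v : P), ∀ S ∈ F, u ∉ S → v ∉ S → Set.Iio u ⊆ S →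
        v ∈ clF F (S ∪ {u}) → u ∈ clF F (S ∪ {v})) :=
  have closed : ∀ X, clF F X ∈ F := clF_mem univ_mem inter_mem
  ⟨CoveringProperty.faigleExchange inter_mem closed,
    FaigleExchange.coveringProperty closed⟩

/-- Given (F∩), (F↓) and (Pr), the covering property (CP) is equivalent to the
Faigle exchange property (FEP). -/
theorem cp_iff_fep {P : Type*} [PartialOrder P] [Finite P] (F : Set (Set P))
    (univ_mem : Set.univ ∈ F)
    (inter_mem : ∀ X ∈ F, ∀ Y ∈ F, X ∩ Y ∈ F)
    (down : ∀ X ∈ F, IsDownSet X)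
    (empty_mem : ∅ ∈ F)
    (Iic_mem : ∀ u : P, Set.Iic u ∈ F)
    (Iio_mem : ∀ u : P, Set.Iio u ∈ F) :
    (∀ (u : P), ∀ X ∈ F, u ∉ X → Set.Iio u ⊆ X →
        ∃ Y ∈ F, u ∈ Y ∧ CoversIn F X Y)
      ↔
    (∀ (u v : P), ∀ S ∈ F, u ∉ S → v ∉ S → Set.Iio u ⊆ S →
        v ∈ clF F (S ∪ {u}) → u ∈ clF F (S ∪ {v})) :=
  cp_iff_fep_general F univ_mem inter_mem
end

section
/- If L is a finite semimodular lattice, then the pair Geom(L) := (Jir(L), {Jir(L) ∩ ↓x : x ∈ L}) is a Faigle geometry, where Jir(L) is the poset of nonzero join-irreducible elements of L with the induced order. -/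
/-- A lattice is (upper) semimodular if `x ⊓ y ⋖ x` implies `y ⋖ x ⊔ y`. -/
def Semimodular (L : Type*) [Lattice L] : Prop :=
  ∀ x y : L, x ⊓ y ⋖ x → y ⋖ x ⊔ y

/-- Every element of a finite lattice is the sup of the sup-irreducibles below it. -/
lemma sSup_supIrred_le_eq {L : Type*} [CompleteLattice L] [Fintype L] (x : L) :
    sSup {a : L | SupIrred a ∧ a ≤ x} = x := by
  obtain ⟨s, hs, hirr⟩ := exists_supIrred_decomposition x
  apply le_antisymm
  · exact sSup_le fun a ha => ha.2
  · rw [← hs]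
    exact Finset.sup_le fun b hb =>
      le_sSup ⟨hirr hb, hs ▸ Finset.le_sup (f := id) hb⟩

/-- For a sup-irreducible `u` in a finite lattice, the sup of all elements
strictly below `u` is strictly below `u`. -/
lemma sSup_lt_of_supIrred {L : Type*} [CompleteLattice L] [Fintype L] {u : L}
    (hu : SupIrred u) : sSup {y : L | y < u} < u := by
  classical
  have hle : sSup {y : L | y < u} ≤ u := sSup_le fun y hy => hy.le
  rcases hle.lt_or_eq with h | h
  · exact h
  · exfalso
    have hfin : ({y : L | y < u}).Finite := Set.toFinite _
    have hsup : hfin.toFinset.sup id = u := by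
      rw [Finset.sup_id_eq_sSup]
      rw [hfin.coe_toFinset]
      exact h
    obtain ⟨y, hy, hyu⟩ := hu.finset_sup_eq hsup
    rw [Set.Finite.mem_toFinset] at hy
    exact hy.ne hyu

/-- Canonical representation of members of `Geom(L)`. -/
lemma canon_eq {L : Type*} [CompleteLattice L] (x : L) :
    {a : {a : L // SupIrred a} | a.1 ≤ x} =
      {a : {a : L // SupIrred a} |
        a.1 ≤ sSup ((↑) '' {a : {a : L // SupIrred a} | a.1 ≤ x})} := by
  ext a
  constructor
  · intro ha
    exact le_sSup ⟨a, ha, rfl⟩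
  · intro ha
    refine le_trans ha (sSup_le ?_)
    rintro b ⟨c, hc, rfl⟩
    exact hc

/-- For a finite semimodular lattice `L`, the pair
`Geom(L) = (Jir L, {Jir L ∩ ↓x : x ∈ L})` is a Faigle geometry, where
`Jir L` is the poset of nonzero join-irreducible elements of `L`. -/
theorem geom_isFaigle (L : Type*) [CompleteLattice L] [Fintype L]
    (hL : Semimodular L) :
    IsFaigle {S : Set {a : L // SupIrred a} | ∃ x : L, S = {a | a.1 ≤ x}} := by
  constructor
  · exact ⟨⊤, by ext a; simp⟩
  · rintro X ⟨x, rfl⟩ Y ⟨y, rfl⟩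
    exact ⟨x ⊓ y, by ext a; simp [le_inf_iff]⟩
  · rintro X ⟨x, rfl⟩ a ha b hba
    exact le_trans (Subtype.coe_le_coe.mpr hba) ha
  · refine ⟨⊥, ?_⟩
    ext a
    simp only [Set.mem_empty_iff_false, Set.mem_setOf_eq, le_bot_iff, false_iff]
    exact a.2.ne_bot
  · intro u
    refine ⟨u.1, ?_⟩
    ext a
    exact Subtype.coe_le_coe.symm
  · intro u
    refine ⟨sSup {y : L | y < u.1}, ?_⟩
    ext a
    constructor
    · intro ha
      exact le_sSup (Subtype.coe_lt_coe.mpr ha)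
    · intro ha
      exact Subtype.coe_lt_coe.mp (lt_of_le_of_lt ha (sSup_lt_of_supIrred u.2))
  · rintro u X ⟨x₀, rfl⟩ hu hIio
    -- canonicalize x₀
    set x : L := sSup ((↑) '' {a : {a : L // SupIrred a} | a.1 ≤ x₀}) with hx
    have hXx : {a : {a : L // SupIrred a} | a.1 ≤ x₀} =
        {a : {a : L // SupIrred a} | a.1 ≤ x} := canon_eq x₀
    set ustar : L := sSup {y : L | y < u.1} with hustar
    have hstar : ustar < u.1 := sSup_lt_of_supIrred u.2
    -- every sup-irreducible strictly below u is ≤ x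
    have hux : ustar ≤ x := by
      rw [← sSup_supIrred_le_eq ustar]
      refine sSup_le ?_
      rintro b ⟨hb, hble⟩
      have hblt : b < u.1 := lt_of_le_of_lt hble hstar
      have hbX : (⟨b, hb⟩ : {a : L // SupIrred a}) ∈
          {a : {a : L // SupIrred a} | a.1 ≤ x₀} :=
        hIio (Subtype.coe_lt_coe.mp hblt)
      rw [hXx] at hbX
      exact hbX
    have hunotx : ¬ u.1 ≤ x := fun h => hu ((hXx ▸ h : u ∈ _))
    have hmeet : u.1 ⊓ x = ustar := by
      apply le_antisymm
      · refine le_sSup ?_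
        exact lt_of_le_of_ne inf_le_left (fun h => hunotx (h ▸ inf_le_right))
      · exact le_inf hstar.le hux
    have hcov1 : u.1 ⊓ x ⋖ u.1 := by
      rw [hmeet]
      exact ⟨hstar, fun c hc hcb => hc.not_ge (le_sSup hcb)⟩
    have hcov2 : x ⋖ u.1 ⊔ x := hL u.1 x hcov1
    refine ⟨{a : {a : L // SupIrred a} | a.1 ≤ u.1 ⊔ x}, ⟨u.1 ⊔ x, rfl⟩,
      le_sup_left, ?_, ?_⟩
    · constructor
      · intro a ha
        rw [hXx] at ha
        exact le_trans ha le_sup_right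
      · intro hsub
        exact hu (hXx ▸ hsub le_sup_left)
    · rintro Z ⟨z₀, rfl⟩ ⟨hXZ, hZY⟩
      set z : L := sSup ((↑) '' {a : {a : L // SupIrred a} | a.1 ≤ z₀}) with hz
      have hZz : {a : {a : L // SupIrred a} | a.1 ≤ z₀} =
          {a : {a : L // SupIrred a} | a.1 ≤ z} := canon_eq z₀
      have hxz : x ≤ z := by
        refine sSup_le ?_
        rintro b ⟨c, hc, rfl⟩
        have : c ∈ {a : {a : L // SupIrred a} | a.1 ≤ z₀} := hXZ.1 hc
        rw [hZz] at this
        exact this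
      have hxnez : x ≠ z := by
        intro h
        apply hXZ.ne
        rw [hXx, hZz, h]
      have hzy : z ≤ u.1 ⊔ x := by
        refine sSup_le ?_
        rintro b ⟨c, hc, rfl⟩
        exact hZY.1 hc
      have hzney : z ≠ u.1 ⊔ x := by
        intro h
        refine hZY.2 fun a ha => ?_
        rw [hZz, h]
        exact ha
      exact hcov2.2 (lt_of_le_of_ne hxz hxnez) (lt_of_le_of_ne hzy hzney)
end

section
/- If u is a nonzero join-irreducible element of a finite semimodular lattice L, then x_u := ⋁{v ∈ Jir(L) : v < u} satisfies x_u < u, x_u ≺ u (u covers x_u in L), and {v ∈ Jir(L) : v ≤ x_u} = {v ∈ Jir(L) : v < u}. -/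
/-- Every element of a finite lattice is the sSup of the sup-irreducible elements below it. -/
lemma le_sSup_supIrred_le {L : Type*} [CompleteLattice L] [Fintype L] (a : L) :
    a ≤ sSup {v : L | SupIrred v ∧ v ≤ a} := by
  obtain ⟨s, hs, hirr⟩ := exists_supIrred_decomposition a
  calc a = s.sup id := hs.symm
    _ ≤ sSup {v : L | SupIrred v ∧ v ≤ a} := by
        refine Finset.sup_le fun b hb => le_sSup ⟨hirr hb, ?_⟩
        exact hs ▸ Finset.le_sup (f := id) hb

/-- If `u` is a nonzero join-irreducible element of a finite semimodular lattice `L`,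
then `x_u := ⋁ {v ∈ Jir L : v < u}` satisfies `x_u < u`, `x_u ⋖ u`, and
`{v ∈ Jir L : v ≤ x_u} = {v ∈ Jir L : v < u}`. -/
theorem joinIrred_lowerCover (L : Type*) [CompleteLattice L] [Fintype L]
    (hL : Semimodular L) (u : L) (hu : SupIrred u) :
    sSup {v : L | SupIrred v ∧ v < u} < u ∧
    sSup {v : L | SupIrred v ∧ v < u} ⋖ u ∧
    {v : L | SupIrred v ∧ v ≤ sSup {v : L | SupIrred v ∧ v < u}}
      = {v : L | SupIrred v ∧ v < u} := by
  classical
  set x := sSup {v : L | SupIrred v ∧ v < u} with hx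
  have hxle : x ≤ u := sSup_le fun v hv => hv.2.le
  have hxlt : x < u := by
    rcases lt_or_eq_of_le hxle with h | h
    · exact h
    -- if x = u, then u ≤ sSup of irreducibles ≤ u; but each irreducible ≤ u
    -- that is not u itself is < u. We derive a contradiction using SupIrred.
    exfalso
    have hule : u ≤ sSup {v : L | SupIrred v ∧ v ≤ u} := le_sSup_supIrred_le u
    obtain ⟨s, hs, hirr⟩ := exists_supIrred_decomposition u
    obtain ⟨i, hi, hiu⟩ := hu.finset_sup_eq hs
    -- u ∈ s, so u is among its own decomposition; fine, no contradiction yet.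
    -- Instead: u ≤ x means u ≤ sSup of elements < u... need strictness.
    -- u = x = sSup S; by compactness in finite lattice, sSup S is a finite sup.
    have : sSup {v : L | SupIrred v ∧ v < u} =
        (Set.toFinset {v : L | SupIrred v ∧ v < u}).sup id := by
      simp [Finset.sup_id_eq_sSup]
    rw [hx, this] at h
    obtain ⟨j, hj, hju⟩ := hu.finset_sup_eq h
    rw [Set.mem_toFinset] at hj
    exact hj.2.ne hju
  have key : x ⋖ u := by
    obtain ⟨y, hxy, hyu⟩ := exists_le_covBy_of_lt hxlt
    have hyx : y ≤ x := by
      refine le_trans (le_sSup_supIrred_le y) (sSup_le ?_)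
      rintro v ⟨hv, hvy⟩
      exact le_sSup ⟨hv, lt_of_le_of_lt hvy hyu.lt⟩
    have : y = x := le_antisymm hyx hxy
    exact this ▸ hyu
  refine ⟨hxlt, key, ?_⟩
  ext v
  constructor
  · rintro ⟨hv, hvx⟩
    exact ⟨hv, lt_of_le_of_lt hvx hxlt⟩
  · rintro ⟨hv, hvu⟩
    exact ⟨hv, le_sSup ⟨hv, hvu⟩⟩
end

section
/- If L and K are semimodular lattices of the same finite length and L is a meet-subsemilattice of K (containing more than one element and closed under the binary meet of K, with the order on L induced from K making L a lattice), then L is a sublattice of K, i.e., L is also closed under the binary join of K. -/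
/-- `b` covers `a` within the subposet `s`. -/
def CovIn {K : Type*} [PartialOrder K] (s : Set K) (a b : K) : Prop :=
  a < b ∧ ∀ z ∈ s, ¬(a < z ∧ z < b)

/-- `j` is the least upper bound of `x` and `y` within the subposet `s`. -/
def IsLUBIn {K : Type*} [PartialOrder K] (s : Set K) (x y j : K) : Prop :=
  j ∈ s ∧ x ≤ j ∧ y ≤ j ∧ ∀ z ∈ s, x ≤ z → y ≤ z → j ≤ z

/-
Semimodularity gives the Jordan–Dedekind chain condition: two maximal chains between the same
endpoints have the same length, because two covers `x`, `y` of a common element are both covered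
by their join. Applied to `s` (bounded: its least element comes from meets, its greatest from
joins), every maximal chain of `s` has length `krullDim s = krullDim K`, so each of its steps must
also be a cover in `K`. Now if `c ⊓ y` is covered by `c` in `s`, then in `K` both `c ⊔ y` and the
join `j` of `s` cover `y`, and `c ⊔ y ≤ j` forces `c ⊔ y = j ∈ s`. The general case reduces to
this one by enlarging `y` to `c ⊔ y` with such a `c ≤ x` and inducting upwards.
-/

open Order

section JordanDedekind

variable {α : Type*} [PartialOrder α]

-- The covering property of semimodular lattices (take `z = x ⊔ y`), made relative to an upper
-- bound `v` so that it makes sense in posets that are not lattices.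
def HasCoverDiamonds (α : Type*) [PartialOrder α] : Prop :=
  ∀ ⦃u x y v : α⦄, u ⋖ x → u ⋖ y → x ≠ y → x ≤ v → y ≤ v → ∃ z, x ⋖ z ∧ y ⋖ z ∧ z ≤ v

abbrev CovSeries (α : Type*) [PartialOrder α] : Type _ := RelSeries {(a, b) : α × α | a ⋖ b}

def CovSeries.toLTSeries (p : CovSeries α) : LTSeries α :=
  p.ofLE fun _ h => CovBy.lt h

@[simp] lemma CovSeries.toLTSeries_length (p : CovSeries α) : p.toLTSeries.length = p.length := rfl
@[simp] lemma CovSeries.toLTSeries_head (p : CovSeries α) : p.toLTSeries.head = p.head := rfl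
@[simp] lemma CovSeries.toLTSeries_last (p : CovSeries α) : p.toLTSeries.last = p.last := rfl

lemma LTSeries.length_eq_zero_of_head_eq_last (p : LTSeries α) (h : p.head = p.last) :
    p.length = 0 := by
  simpa [eq_comm] using congrArg Fin.val (p.strictMono.injective h)

lemma exists_covSeries [WellFoundedLT α] [WellFoundedGT α] {x y : α} (h : x ≤ y) :
    ∃ p : CovSeries α, p.head = x ∧ p.last = y := by
  obtain ⟨a, rfl, n, rfl, ha⟩ := exists_covBy_seq_of_wellFoundedLT_wellFoundedGT_of_le h
  exact ⟨⟨n, fun i => a i, fun i => ha i i.2⟩, rfl, rfl⟩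

theorem CovSeries.length_eq_of_head_eq_of_last_eq [WellFoundedLT α] [WellFoundedGT α]
    (hα : HasCoverDiamonds α) {n : ℕ} :
    ∀ p q : CovSeries α, p.length = n → p.head = q.head → p.last = q.last → q.length = n := by
  induction n using Nat.strong_induction_on with
  | _ n ih =>
  intro p q hp hhead hlast
  cases p using RelSeries.inductionOn with
  | singleton u =>
    rw [← hp]
    exact q.toLTSeries.length_eq_zero_of_head_eq_last (hhead.symm.trans hlast)
  | cons p u hup =>
  cases q using RelSeries.inductionOn with
  | singleton v =>
    have := (CovSeries.toLTSeries (p.cons u hup)).length_eq_zero_of_head_eq_last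
      (hhead.trans hlast.symm)
    simp at this
  | cons q v hvq =>
  simp only [RelSeries.cons_length, RelSeries.head_cons, RelSeries.last_cons] at hp hhead hlast ⊢
  subst hhead
  by_cases hxy : p.head = q.head
  · rw [ih p.length (by omega) p q rfl hxy hlast, hp]
  -- Otherwise both tails are compared with a chain through a common cover `z` of their heads.
  · obtain ⟨z, hxz, hyz, hzv⟩ := hα hup hvq hxy
      (CovSeries.toLTSeries p).head_le_last (hlast ▸ (CovSeries.toLTSeries q).head_le_last)
    obtain ⟨c, hc_head, hc_last⟩ := exists_covSeries hzv
    have hpc := ih p.length (by omega) p (c.cons p.head (hc_head ▸ hxz)) rfl (by simp)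
      (by simp [hc_last])
    rw [RelSeries.cons_length] at hpc
    have hcq := ih (c.length + 1) (by omega) (c.cons q.head (hc_head ▸ hyz)) q
      (by simp) (by simp) (by simp [hc_last, hlast])
    omega

theorem CovSeries.length_eq_krullDim [BoundedOrder α] [WellFoundedLT α] [WellFoundedGT α]
    (hα : HasCoverDiamonds α) (p : CovSeries α) (hhead : p.head = ⊥) (hlast : p.last = ⊤) :
    krullDim α = p.length := by
  refine le_antisymm (iSup_le fun q => ?_) (CovSeries.toLTSeries p).length_le_krullDim
  obtain ⟨t, i, -, ht_head, ht_last⟩ :=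
    q.exists_relSeries_covBy_and_head_eq_bot_and_last_eq_bot
  have hqt : q.length ≤ t.length := by simpa using Fintype.card_le_of_embedding i
  have htp : p.length = t.length :=
    CovSeries.length_eq_of_head_eq_of_last_eq hα t p rfl (ht_head.trans hhead.symm)
      (ht_last.trans hlast.symm)
  exact_mod_cast hqt.trans htp.ge

lemma LTSeries.covBy_of_krullDim_le_length_append {p q : LTSeries α} (h : p.last < q.head)
    (hlen : krullDim α ≤ (p.append q h).length) : p.last ⋖ q.head := by
  refine ⟨h, fun z hpz hzq => ?_⟩
  have hlonger := LTSeries.length_le_krullDim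
    ((p.snoc z hpz).append q (by rw [RelSeries.last_snoc]; exact hzq))
  have := hlonger.trans hlen
  simp only [RelSeries.append_length, RelSeries.snoc_length, Nat.cast_le] at this
  omega

theorem CovBy.map_of_krullDim_le {β : Type*} [PartialOrder β] [BoundedOrder β]
    [WellFoundedLT β] [WellFoundedGT β] (hβ : HasCoverDiamonds β) {f : β → α} (hf : StrictMono f)
    (hdim : krullDim α ≤ krullDim β) {a b : β} (hab : a ⋖ b) : f a ⋖ f b := by
  obtain ⟨p, hp_head, rfl⟩ := exists_covSeries (bot_le : ⊥ ≤ a)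
  obtain ⟨q, rfl, hq_last⟩ := exists_covSeries (le_top : b ≤ ⊤)
  have hlen := CovSeries.length_eq_krullDim hβ (p.append q hab) (by simpa using hp_head)
    (by simpa using hq_last)
  exact LTSeries.covBy_of_krullDim_le_length_append (p := (CovSeries.toLTSeries p).map f hf)
    (q := (CovSeries.toLTSeries q).map f hf) (hf hab.lt) (hdim.trans_eq hlen)

end JordanDedekind

section Subposet

variable {K : Type*} {s : Set K}

lemma covIn_iff_covBy [PartialOrder K] {a b : s} : CovIn s a b ↔ a ⋖ b :=
  ⟨fun h => ⟨h.1, fun z haz hzb => h.2 z z.2 ⟨haz, hzb⟩⟩,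
    fun h => ⟨h.1, fun z hz ⟨haz, hzb⟩ => h.2 (c := ⟨z, hz⟩) haz hzb⟩⟩

lemma IsLUBIn.symm [PartialOrder K] {x y j : K} (h : IsLUBIn s x y j) : IsLUBIn s y x j :=
  ⟨h.1, h.2.2.1, h.2.1, fun z hz hyz hxz => h.2.2.2 z hz hxz hyz⟩

lemma exists_isGreatest_of_isLUBIn [PartialOrder K] [WellFoundedGT K] (hs : s.Nonempty)
    (hjoin : ∀ x ∈ s, ∀ y ∈ s, ∃ j, IsLUBIn s x y j) : ∃ M, IsGreatest s M := by
  obtain ⟨M, hM, hM_max⟩ := exists_maximal_of_wellFoundedGT (· ∈ s) hs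
  refine ⟨M, hM, fun x hx => ?_⟩
  obtain ⟨j, hj, hMj, hxj, -⟩ := hjoin M hM x hx
  exact hxj.trans (hM_max hj hMj)

variable [Lattice K]

lemma exists_isLeast_of_inf_mem [WellFoundedLT K] (hs : s.Nonempty)
    (hmeet : ∀ x ∈ s, ∀ y ∈ s, x ⊓ y ∈ s) : ∃ m, IsLeast s m := by
  obtain ⟨m, hm, hm_min⟩ := exists_minimal_of_wellFoundedLT (· ∈ s) hs
  exact ⟨m, hm, fun x hx => (hm_min (hmeet m hm x hx) inf_le_left).trans inf_le_right⟩

lemma inf_eq_of_covBy_of_covBy (hmeet : ∀ x ∈ s, ∀ y ∈ s, x ⊓ y ∈ s) {u x y : s}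
    (hux : u ⋖ x) (huy : u ⋖ y) (hxy : x ≠ y) : (x : K) ⊓ y = u := by
  let w : s := ⟨x ⊓ y, hmeet x x.2 y y.2⟩
  rcases hux.eq_or_eq (c := w) (le_inf hux.le huy.le) inf_le_left with hw | hw
  · exact congrArg Subtype.val hw
  · have hxy_le : x ≤ y := hw ▸ (inf_le_right : (x : K) ⊓ y ≤ y)
    rcases huy.eq_or_eq hux.le hxy_le with rfl | rfl
    · exact absurd hux.lt (lt_irrefl _)
    · exact absurd rfl hxy

lemma hasCoverDiamonds_of_isLUBIn (hmeet : ∀ x ∈ s, ∀ y ∈ s, x ⊓ y ∈ s)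
    (hjoin : ∀ x ∈ s, ∀ y ∈ s, ∃ j, IsLUBIn s x y j)
    (hsemi : ∀ x ∈ s, ∀ y ∈ s, ∀ j, IsLUBIn s x y j → CovIn s (x ⊓ y) x → CovIn s y j) :
    HasCoverDiamonds s := by
  intro u x y v hux huy hxy hxv hyv
  have hinf := inf_eq_of_covBy_of_covBy hmeet hux huy hxy
  obtain ⟨j, hj⟩ := hjoin x x.2 y y.2
  refine ⟨⟨j, hj.1⟩, covIn_iff_covBy.1 ?_, covIn_iff_covBy.1 ?_, hj.2.2.2 v v.2 hxv hyv⟩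
  · exact hsemi y y.2 x x.2 j hj.symm (by rw [inf_comm, hinf]; exact covIn_iff_covBy.2 huy)
  · exact hsemi x x.2 y y.2 j hj (by rw [hinf]; exact covIn_iff_covBy.2 hux)

lemma sup_mem_of_covIn_inf (hK : Semimodular K) (hmeet : ∀ x ∈ s, ∀ y ∈ s, x ⊓ y ∈ s)
    (hjoin : ∀ x ∈ s, ∀ y ∈ s, ∃ j, IsLUBIn s x y j)
    (hsemi : ∀ x ∈ s, ∀ y ∈ s, ∀ j, IsLUBIn s x y j → CovIn s (x ⊓ y) x → CovIn s y j)
    (hcov : ∀ a ∈ s, ∀ b ∈ s, CovIn s a b → a ⋖ b) {c y : K} (hc : c ∈ s) (hy : y ∈ s)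
    (hcy : CovIn s (c ⊓ y) c) : c ⊔ y ∈ s := by
  obtain ⟨j, hj⟩ := hjoin c hc y hy
  have hy_sup : y ⋖ c ⊔ y := hK c y (hcov _ (hmeet c hc y hy) c hc hcy)
  have hy_j : y ⋖ j := hcov y hy j hj.1 (hsemi c hc y hy j hj hcy)
  have hsup_j : c ⊔ y = j :=
    (hy_j.eq_or_eq hy_sup.le (sup_le hj.2.1 hj.2.2.1)).resolve_left hy_sup.lt.ne'
  exact hsup_j ▸ hj.1

lemma sup_mem_of_forall_covIn_inf [WellFoundedLT K] [WellFoundedGT K]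
    (hcov_sup : ∀ c ∈ s, ∀ y ∈ s, CovIn s (c ⊓ y) c → c ⊔ y ∈ s) {x y : K} (hx : x ∈ s)
    (hy : y ∈ s) : x ⊔ y ∈ s := by
  induction y using WellFoundedGT.induction with
  | _ y ih =>
  by_cases hxy : x ≤ y
  · rwa [sup_eq_right.2 hxy]
  obtain ⟨c, hcx, ⟨hc, hc_gt⟩, hc_min⟩ := exists_minimal_le_of_wellFoundedLT
    (fun z => z ∈ s ∧ x ⊓ y < z) x ⟨hx, inf_lt_left.2 hxy⟩
  have hcy : c ⊓ y = x ⊓ y := le_antisymm (inf_le_inf_right y hcx) (le_inf hc_gt.le inf_le_right)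
  have hcov : CovIn s (c ⊓ y) c :=
    ⟨hcy ▸ hc_gt, fun z hz ⟨hz_gt, hz_lt⟩ => (hc_min ⟨hz, hcy ▸ hz_gt⟩ hz_lt.le).not_gt hz_lt⟩
  have hy_lt : y < c ⊔ y := right_lt_sup.2 fun hc_le => hc_gt.not_ge (le_inf hcx hc_le)
  have hxcy := ih (c ⊔ y) hy_lt (hcov_sup c hc y hy hcov)
  rwa [← sup_assoc, sup_eq_left.2 hcx] at hxcy

end Subposet

theorem meet_subsemilattice_is_sublattice_general (K : Type*) [CompleteLattice K] [Fintype K]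
    (hK : Semimodular K) (s : Set K)
    -- `s` is a meet-subsemilattice of `K`
    (hmeet : ∀ x ∈ s, ∀ y ∈ s, x ⊓ y ∈ s)
    -- with the induced order, `s` is a lattice: binary joins exist within `s`
    (hjoin : ∀ x ∈ s, ∀ y ∈ s, ∃ j, IsLUBIn s x y j)
    -- `s` (as a lattice in its own right) is semimodular
    (hsemi : ∀ x ∈ s, ∀ y ∈ s, ∀ j, IsLUBIn s x y j →
        CovIn s (x ⊓ y) x → CovIn s y j)
    -- `s` and `K` have the same length
    (hlen : Order.krullDim s = Order.krullDim K) :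
    ∀ x ∈ s, ∀ y ∈ s, x ⊔ y ∈ s := by
  intro x hx y hy
  obtain ⟨m, hm⟩ := exists_isLeast_of_inf_mem ⟨x, hx⟩ hmeet
  obtain ⟨M, hM⟩ := exists_isGreatest_of_isLUBIn ⟨x, hx⟩ hjoin
  let _ : BoundedOrder s := { hm.orderBot, hM.orderTop with }
  have hcov (a : K) (ha : a ∈ s) (b : K) (hb : b ∈ s) (hab : CovIn s a b) : a ⋖ b :=
    (covIn_iff_covBy.1 hab : (⟨a, ha⟩ : s) ⋖ ⟨b, hb⟩).map_of_krullDim_le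
      (hasCoverDiamonds_of_isLUBIn hmeet hjoin hsemi) (Subtype.strictMono_coe _) hlen.ge
  exact sup_mem_of_forall_covIn_inf
    (fun c hc y hy => sup_mem_of_covIn_inf hK hmeet hjoin hsemi hcov hc hy) hx hy

/-- Wild's lemma: if `L` and `K` are semimodular lattices of the same finite length
and `L` is a meet-subsemilattice of `K` (with more than one element, and a lattice
in the induced order), then `L` is a sublattice of `K`: it is closed under the join
of `K`. -/
theorem meet_subsemilattice_is_sublattice (K : Type*) [CompleteLattice K] [Fintype K]
    (hK : Semimodular K) (s : Set K)
    (hcard : 1 < s.ncard)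
    -- `s` is a meet-subsemilattice of `K`
    (hmeet : ∀ x ∈ s, ∀ y ∈ s, x ⊓ y ∈ s)
    -- with the induced order, `s` is a lattice: binary joins exist within `s`
    (hjoin : ∀ x ∈ s, ∀ y ∈ s, ∃ j, IsLUBIn s x y j)
    -- `s` (as a lattice in its own right) is semimodular
    (hsemi : ∀ x ∈ s, ∀ y ∈ s, ∀ j, IsLUBIn s x y j →
        CovIn s (x ⊓ y) x → CovIn s y j)
    -- `s` and `K` have the same length
    (hlen : Order.krullDim s = Order.krullDim K) :
    ∀ x ∈ s, ∀ y ∈ s, x ⊔ y ∈ s :=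
  meet_subsemilattice_is_sublattice_general K hK s hmeet hjoin hsemi hlen
end

section
/- Every finite semimodular lattice L has a length-preserving lattice embedding into a finite geometric lattice K with |At(K)| = |Jir(L)|, where At(K) is the set of atoms of K. -/
open Finset Order

lemma Finset.card_union_sdiff_add_card_inter_sdiff_le {α : Type*} [DecidableEq α]
    (A B J₁ J₂ : Finset α) :
    #((A ∪ B) \ (J₁ ∪ J₂)) + #((A ∩ B) \ (J₁ ∩ J₂)) ≤ #(A \ J₁) + #(B \ J₂) := by
  rw [← card_union_add_card_inter ((A ∪ B) \ (J₁ ∪ J₂)),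
    ← card_union_add_card_inter (A \ J₁)]
  refine add_le_add (card_le_card fun e => ?_) (card_le_card fun e => ?_) <;>
    simp only [mem_union, mem_inter, mem_sdiff] <;> tauto

section Grading

variable {α : Type*}

lemma Order.coheight_ne_top_of_finite [Preorder α] [Finite α] (a : α) : coheight a ≠ ⊤ := by
  have := Fintype.ofFinite α
  refine ne_top_of_le_ne_top (ENat.natCast_ne_top (Fintype.card α)) (coheight_le fun p _ => ?_)
  exact_mod_cast p.length_lt_card.le

lemma Order.toNat_coheight_lt_of_lt [Preorder α] [Finite α] {a b : α} (hab : a < b) :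
    (coheight b).toNat < (coheight a).toNat := by
  have := coheight_strictAnti hab (coheight_ne_top_of_finite b).lt_top
  rwa [← ENat.natCast_toNat (coheight_ne_top_of_finite a),
    ← ENat.natCast_toNat (coheight_ne_top_of_finite b), Nat.cast_lt] at this

lemma CovBy.grade_eq_add_one [Preorder α] [GradeOrder ℕ α] {a b : α} (h : a ⋖ b) :
    grade ℕ b = grade ℕ a + 1 :=
  (Nat.covBy_iff_add_one_eq.mp (h.grade ℕ)).symm

lemma grade_pos_of_ne_bot [PartialOrder α] [OrderBot α] [GradeMinOrder ℕ α] {a : α}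
    (ha : a ≠ ⊥) : 0 < grade ℕ a := by
  simpa using grade_strictMono (𝕆 := ℕ) ha.bot_lt

theorem krullDim_eq_grade_top [PartialOrder α] [OrderBot α] [OrderTop α] [Finite α]
    [GradeMinOrder ℕ α] : krullDim α = grade ℕ (⊤ : α) := by
  apply le_antisymm
  · refine iSup_le fun p => ?_
    have hp : grade ℕ p.head + p.length ≤ grade ℕ p.last :=
      (p.map _ (grade_strictMono (𝕆 := ℕ))).head_add_length_le_nat
    have htop := (grade_strictMono (𝕆 := ℕ)).monotone (le_top : p.last ≤ ⊤)
    exact_mod_cast (by omega : p.length ≤ grade ℕ (⊤ : α))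
  · obtain ⟨a, ha₀, n, haₙ, hcov⟩ :=
      exists_covBy_seq_of_wellFoundedLT_wellFoundedGT_of_le (bot_le : (⊥ : α) ≤ ⊤)
    have hgrade : ∀ i ≤ n, grade ℕ (a i) = i := by
      intro i hi
      induction i with
      | zero => simp [ha₀]
      | succ i ih => rw [(hcov i hi).grade_eq_add_one, ih (by omega)]
    rw [← haₙ, hgrade n le_rfl]
    exact le_krullDim_iff.mpr ⟨⟨n, fun i => a i, fun i => (hcov i i.2).lt⟩, rfl⟩

variable [Lattice α]

lemma two_le_grade_sup [OrderBot α] [GradeMinOrder ℕ α] {a b : α} (ha : a ≠ ⊥) (hb : b ≠ ⊥)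
    (hab : a ≠ b) : 2 ≤ grade ℕ (a ⊔ b) := by
  have ha₀ := grade_pos_of_ne_bot ha
  have hb₀ := grade_pos_of_ne_bot hb
  rcases (le_sup_left : a ≤ a ⊔ b).lt_or_eq with hlt | heq
  · have := grade_strictMono (𝕆 := ℕ) hlt
    omega
  · have := grade_strictMono (𝕆 := ℕ) ((heq ▸ le_sup_right : b ≤ a).lt_of_ne hab.symm)
    rw [← heq]
    omega

theorem IsUpperModularLattice.of_grade_sup_add_grade_inf_le [GradeOrder ℕ α]
    (h : ∀ a b : α, grade ℕ (a ⊔ b) + grade ℕ (a ⊓ b) ≤ grade ℕ a + grade ℕ b) :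
    IsUpperModularLattice α where
  covBy_sup_of_inf_covBy {a b} hab := by
    have hlt : b < a ⊔ b := lt_of_le_of_ne le_sup_right fun heq =>
      hab.lt.ne (inf_eq_left.2 (heq ▸ le_sup_left))
    refine covBy_iff_lt_covBy_grade.2 ⟨hlt, Nat.covBy_iff_add_one_eq.2 ?_⟩
    have := h a b
    have := hab.grade_eq_add_one
    have := grade_strictMono (𝕆 := ℕ) hlt
    omega

variable [IsUpperModularLattice α]

/-- Two distinct upper covers `c, d` of `a` are both covered by `c ⊔ d`, so by induction from the
top they have the same coheight. -/
theorem IsUpperModularLattice.coheight_eq_add_one_of_covBy [WellFoundedGT α] [IsStronglyAtomic α]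
    {a b : α} (hab : a ⋖ b) : coheight a = coheight b + 1 := by
  induction a using WellFoundedGT.induction generalizing b with
  | _ a ih =>
  have coheight_covers : ∀ c d, a ⋖ c → a ⋖ d → coheight c = coheight d := by
    intro c d hc hd
    obtain rfl | hcd := eq_or_ne c d
    · rfl
    have hinf : c ⊓ d = a := hc.wcovBy.inf_eq hd.wcovBy hcd
    rw [ih c hc.lt (covBy_sup_of_inf_covBy_right (hinf ▸ hd)),
      ih d hd.lt (covBy_sup_of_inf_covBy_left (hinf ▸ hc))]
  refine le_antisymm ?_ (coheight_add_one_le hab.lt)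
  rw [coheight_eq_iSup_gt_coheight]
  refine iSup₂_le fun y hy => ?_
  obtain ⟨c, hac, hcy⟩ := exists_covBy_le_of_lt hy
  rw [← coheight_covers c b hac hab]
  gcongr

lemma IsUpperModularLattice.toNat_coheight_eq_add_one_of_covBy [Finite α] {a b : α} (hab : a ⋖ b) :
    (coheight a).toNat = (coheight b).toNat + 1 := by
  rw [coheight_eq_add_one_of_covBy hab,
    ENat.toNat_add (coheight_ne_top_of_finite b) ENat.one_ne_top]
  rfl

noncomputable abbrev IsUpperModularLattice.gradeMinOrder (α : Type*) [Lattice α] [OrderBot α]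
    [Finite α] [IsUpperModularLattice α] : GradeMinOrder ℕ α where
  grade x := (coheight (⊥ : α)).toNat - (coheight x).toNat
  grade_strictMono a b hab := by
    have := toNat_coheight_lt_of_lt hab
    have := ENat.toNat_le_toNat (coheight_anti (bot_le : ⊥ ≤ a)) (coheight_ne_top_of_finite ⊥)
    dsimp only
    omega
  covBy_grade a b hab := by
    have := toNat_coheight_eq_add_one_of_covBy hab
    have := ENat.toNat_le_toNat (coheight_anti (bot_le : ⊥ ≤ a)) (coheight_ne_top_of_finite ⊥)
    rw [Nat.covBy_iff_add_one_eq]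
    omega
  isMin_grade a ha := by
    rw [ha.eq_bot]
    simp

variable [GradeOrder ℕ α]

lemma IsUpperModularLattice.grade_sup_le_add_one {a b c : α} (hab : a ⋖ b) (hac : a ≤ c) :
    grade ℕ (b ⊔ c) ≤ grade ℕ c + 1 := by
  by_cases hbc : b ≤ c
  · rw [sup_eq_right.2 hbc]
    omega
  have hinf : b ⊓ c = a :=
    ((hab.eq_or_eq (le_inf hab.le hac) inf_le_left).resolve_right fun h => hbc (h ▸ inf_le_right))
  exact (covBy_sup_of_inf_covBy_left (hinf ▸ hab)).grade_eq_add_one.le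

lemma IsUpperModularLattice.grade_sup_le_add_one_of_forall_lt_le {p y : α}
    (hp : ∀ x < p, x ≤ y) : grade ℕ (p ⊔ y) ≤ grade ℕ y + 1 := by
  by_cases hpy : p ≤ y
  · rw [sup_eq_right.2 hpy]
    omega
  refine grade_sup_le_add_one ⟨inf_lt_left.2 hpy, fun c hc hcp => ?_⟩ inf_le_right
  exact hc.not_ge (le_inf hcp.le (hp c hcp))

lemma IsUpperModularLattice.grade_sup_add_grade_le [WellFoundedLT α] [IsStronglyCoatomic α]
    {a b : α} (hab : a ≤ b) (c : α) :
    grade ℕ (c ⊔ b) + grade ℕ a ≤ grade ℕ (c ⊔ a) + grade ℕ b := by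
  induction b using WellFoundedLT.induction with
  | _ b ih =>
  obtain rfl | hlt := hab.eq_or_lt
  · rfl
  obtain ⟨b', hab', hb'b⟩ := exists_le_covBy_of_lt hlt
  have hsup : b ⊔ (c ⊔ b') = c ⊔ b := by
    rw [sup_left_comm, sup_eq_left.2 hb'b.le]
  have := grade_sup_le_add_one hb'b (le_sup_right : b' ≤ c ⊔ b')
  have := ih b' hb'b.lt hab'
  have := hb'b.grade_eq_add_one
  rw [hsup] at *
  omega

theorem IsUpperModularLattice.grade_sup_add_grade_inf_le [WellFoundedLT α]
    [IsStronglyCoatomic α] (a b : α) :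
    grade ℕ (a ⊔ b) + grade ℕ (a ⊓ b) ≤ grade ℕ a + grade ℕ b := by
  simpa only [sup_inf_self] using grade_sup_add_grade_le (inf_le_right : a ⊓ b ≤ b) a

end Grading

namespace SupIrredMatroid

open scoped Classical

abbrev SupIrreds (L : Type*) [SemilatticeSup L] := {p : L // SupIrred p}

variable {L : Type*} [Lattice L] [Fintype L]

noncomputable def supIrredBelow (x : L) : Finset (SupIrreds L) := {p | (p : L) ≤ x}

@[simp]
lemma mem_supIrredBelow {x : L} {p : SupIrreds L} :
    p ∈ supIrredBelow x ↔ (p : L) ≤ x := by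
  simp [supIrredBelow]

lemma supIrredBelow_mono : Monotone (supIrredBelow (L := L)) :=
  fun _ _ hxy _ hp => mem_supIrredBelow.2 ((mem_supIrredBelow.1 hp).trans hxy)

lemma supIrredBelow_inf (x y : L) :
    supIrredBelow (x ⊓ y) = supIrredBelow x ∩ supIrredBelow y := by
  ext
  simp

@[simp]
lemma supIrredBelow_top [OrderTop L] : supIrredBelow (⊤ : L) = univ := by
  ext
  simp

lemma isLowerSet_supIrredBelow (x : L) :
    IsLowerSet (supIrredBelow x : Set (SupIrreds L)) :=
  fun _ _ hqp hp => mem_supIrredBelow.2 ((Subtype.coe_le_coe.2 hqp).trans (mem_supIrredBelow.1 hp))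

lemma sup_supIrredBelow [OrderBot L] (x : L) : (supIrredBelow x).sup Subtype.val = x := by
  refine le_antisymm (Finset.sup_le fun p hp => mem_supIrredBelow.1 hp) ?_
  obtain ⟨s, hsx, hs⟩ := exists_supIrred_decomposition x
  conv_lhs => rw [← hsx]
  refine Finset.sup_le fun b hb => ?_
  have hbx : (⟨b, hs hb⟩ : SupIrreds L) ∈ supIrredBelow x :=
    mem_supIrredBelow.2 (hsx ▸ le_sup (f := id) hb)
  exact le_sup (f := Subtype.val) hbx

lemma supIrredBelow_injective [OrderBot L] : Function.Injective (supIrredBelow (L := L)) :=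
  fun x y h => by rw [← sup_supIrredBelow x, h, sup_supIrredBelow]

variable [GradeMinOrder ℕ L]

noncomputable def rank (A : Finset (SupIrreds L)) : ℕ :=
  ⨅ z : L, grade ℕ z + #(A \ supIrredBelow z)

lemma rank_le (A : Finset (SupIrreds L)) (z : L) :
    rank A ≤ grade ℕ z + #(A \ supIrredBelow z) :=
  ciInf_le' _ z

lemma le_rank [Nonempty L] {A : Finset (SupIrreds L)} {n : ℕ}
    (h : ∀ z : L, n ≤ grade ℕ z + #(A \ supIrredBelow z)) : n ≤ rank A :=
  le_ciInf h

lemma exists_rank_eq [Nonempty L] (A : Finset (SupIrreds L)) :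
    ∃ z : L, grade ℕ z + #(A \ supIrredBelow z) = rank A :=
  exists_eq_ciInf_of_finite

lemma rank_mono [Nonempty L] : Monotone (rank (L := L)) := fun A B hAB => by
  obtain ⟨z, hz⟩ := exists_rank_eq B
  exact hz ▸ (rank_le A z).trans (by gcongr)

lemma rank_insert_le [Nonempty L] (A : Finset (SupIrreds L)) (q : SupIrreds L) :
    rank (insert q A) ≤ rank A + 1 := by
  obtain ⟨z, hz⟩ := exists_rank_eq A
  refine (rank_le _ z).trans ?_
  rw [← hz, add_assoc]
  gcongr
  exact (card_le_card (by grind)).trans (card_insert_le q _)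

lemma rank_supIrredBelow_le (x : L) : rank (supIrredBelow x) ≤ grade ℕ x := by
  simpa using rank_le (supIrredBelow x) x

noncomputable def closure (A : Finset (SupIrreds L)) : Finset (SupIrreds L) :=
  {q | rank (insert q A) = rank A}

@[simp]
lemma mem_closure {A : Finset (SupIrreds L)} {q : SupIrreds L} :
    q ∈ closure A ↔ rank (insert q A) = rank A := by
  simp [closure]

lemma subset_closure (A : Finset (SupIrreds L)) : A ⊆ closure A :=
  fun q hq => mem_closure.2 (by rw [insert_eq_of_mem hq])

def IsFlat (F : Finset (SupIrreds L)) : Prop :=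
  ∀ q, rank (insert q F) = rank F → q ∈ F

lemma IsFlat.rank_lt_of_ssubset [Nonempty L] {F G : Finset (SupIrreds L)} (hF : IsFlat F)
    (hFG : F ⊂ G) : rank F < rank G := by
  obtain ⟨q, hqG, hqF⟩ := exists_of_ssubset hFG
  exact (lt_of_le_of_ne (rank_mono (subset_insert q F)) fun h => hqF (hF q h.symm)).trans_le
    (rank_mono (insert_subset hqG hFG.subset))

variable [OrderBot L]

@[simp]
lemma rank_empty : rank (∅ : Finset (SupIrreds L)) = 0 :=
  Nat.le_zero.1 ((rank_le ∅ ⊥).trans (by simp))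

lemma rank_singleton (q : SupIrreds L) : rank {q} = 1 := by
  refine le_antisymm (by simpa using rank_insert_le ∅ q) (le_rank fun z => ?_)
  by_cases hqz : (q : L) ≤ z
  · have := grade_pos_of_ne_bot (ne_bot_of_le_ne_bot q.2.ne_bot hqz)
    omega
  · rw [sdiff_eq_self_of_disjoint (by simpa using hqz), card_singleton]
    omega

lemma two_le_rank_pair {p q : SupIrreds L} (hpq : p ≠ q) : 2 ≤ rank {p, q} := by
  have two_le_grade := two_le_grade_sup p.2.ne_bot q.2.ne_bot (Subtype.coe_injective.ne hpq)
  have hp₀ := grade_pos_of_ne_bot p.2.ne_bot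
  have hq₀ := grade_pos_of_ne_bot q.2.ne_bot
  refine le_rank fun z => ?_
  by_cases hp : (p : L) ≤ z <;> by_cases hq : (q : L) ≤ z
  · have := grade_mono (𝕆 := ℕ) (sup_le hp hq)
    omega
  · have := grade_mono (𝕆 := ℕ) hp
    have : 0 < #({p, q} \ supIrredBelow z) := card_pos.2 ⟨q, by simp [hq]⟩
    omega
  · have := grade_mono (𝕆 := ℕ) hq
    have : 0 < #({p, q} \ supIrredBelow z) := card_pos.2 ⟨p, by simp [hp]⟩
    omega
  · rw [sdiff_eq_self_of_disjoint (by simp [hp, hq]), card_pair hpq]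
    omega

lemma isFlat_empty : IsFlat (∅ : Finset (SupIrreds L)) := fun q hq => by
  simp [rank_singleton] at hq

lemma isFlat_singleton (q : SupIrreds L) : IsFlat {q} := fun p hp => by
  by_contra hpq
  have := two_le_rank_pair (mem_singleton.not.1 hpq)
  rw [hp, rank_singleton] at this
  omega

variable [IsUpperModularLattice L]

/-- Everything strictly below a maximal element `p` of `A` lies below the join of `A.erase p`, so
adding `p` back raises the grade by at most one. -/
lemma grade_sup_finset_sup_le {A : Finset (SupIrreds L)}
    (hA : IsLowerSet (A : Set (SupIrreds L))) (z : L) :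
    grade ℕ (z ⊔ A.sup Subtype.val) ≤ grade ℕ z + #(A \ supIrredBelow z) := by
  induction A using Finset.strongInduction with
  | H A ih =>
  obtain rfl | hne := A.eq_empty_or_nonempty
  · simp
  obtain ⟨p, hpA, hpmax⟩ := A.exists_maximal hne
  set A' := A.erase p
  have hA' : IsLowerSet (A' : Set (SupIrreds L)) := fun r q hqr hr => by
    have hrA := mem_of_mem_erase hr
    refine mem_erase.2 ⟨fun hqp => ?_, hA hqr hrA⟩
    subst hqp
    exact ne_of_mem_erase hr (le_antisymm (hpmax hrA hqr) hqr)
  have hIH := ih A' (erase_ssubset hpA) hA'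
  have hsup : z ⊔ A.sup Subtype.val = (p : L) ⊔ (z ⊔ A'.sup Subtype.val) := by
    rw [← insert_erase hpA, sup_insert, sup_left_comm]
  have hsdiff : A' \ supIrredBelow z = (A \ supIrredBelow z).erase p := erase_sdiff_comm _ _ _
  by_cases hpz : (p : L) ≤ z
  · rw [hsup, sup_eq_right.2 (hpz.trans le_sup_left), ← erase_eq_of_notMem (s := A \ _)
      (fun h => (mem_sdiff.1 h).2 (mem_supIrredBelow.2 hpz)), ← hsdiff]
    exact hIH
  have below_p : ∀ x : L, x < p → x ≤ z ⊔ A'.sup Subtype.val := fun x hx => by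
    rw [← sup_supIrredBelow x]
    refine Finset.sup_le fun q hq => le_sup_of_le_right (le_sup (f := Subtype.val) ?_)
    have hqp : q < p := (mem_supIrredBelow.1 hq).trans_lt hx
    exact mem_erase.2 ⟨hqp.ne, hA hqp.le hpA⟩
  have hcard : #(A \ supIrredBelow z) = #(A' \ supIrredBelow z) + 1 := by
    rw [hsdiff, card_erase_add_one (mem_sdiff.2 ⟨hpA, by simpa using hpz⟩)]
  rw [hsup, hcard]
  have := IsUpperModularLattice.grade_sup_le_add_one_of_forall_lt_le below_p
  omega

lemma grade_finset_sup_le_rank {A : Finset (SupIrreds L)}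
    (hA : IsLowerSet (A : Set (SupIrreds L))) : grade ℕ (A.sup Subtype.val) ≤ rank A :=
  le_rank fun z => (grade_mono (𝕆 := ℕ) le_sup_right).trans (grade_sup_finset_sup_le hA z)

lemma rank_supIrredBelow (x : L) : rank (supIrredBelow x) = grade ℕ x :=
  (rank_supIrredBelow_le x).antisymm <| by
    simpa only [sup_supIrredBelow] using grade_finset_sup_le_rank (isLowerSet_supIrredBelow x)

lemma rank_union_add_rank_inter_le (A B : Finset (SupIrreds L)) :
    rank (A ∪ B) + rank (A ∩ B) ≤ rank A + rank B := by
  obtain ⟨z₁, hz₁⟩ := exists_rank_eq A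
  obtain ⟨z₂, hz₂⟩ := exists_rank_eq B
  have h_union := rank_le (A ∪ B) (z₁ ⊔ z₂)
  have h_inter := rank_le (A ∩ B) (z₁ ⊓ z₂)
  rw [supIrredBelow_inf] at h_inter
  have h_sup : #((A ∪ B) \ supIrredBelow (z₁ ⊔ z₂)) ≤
      #((A ∪ B) \ (supIrredBelow z₁ ∪ supIrredBelow z₂)) :=
    card_le_card (sdiff_subset_sdiff subset_rfl
      (union_subset (supIrredBelow_mono le_sup_left) (supIrredBelow_mono le_sup_right)))
  have := card_union_sdiff_add_card_inter_sdiff_le A B (supIrredBelow z₁) (supIrredBelow z₂)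
  have := IsUpperModularLattice.grade_sup_add_grade_inf_le z₁ z₂
  omega

lemma rank_insert_eq_of_subset {X Y : Finset (SupIrreds L)} {q : SupIrreds L} (hXY : X ⊆ Y)
    (h : rank (insert q X) = rank X) : rank (insert q Y) = rank Y := by
  have hsub := rank_union_add_rank_inter_le Y (insert q X)
  rw [union_insert, union_eq_left.2 hXY] at hsub
  have := rank_mono (subset_inter hXY (subset_insert q X))
  have := rank_mono (subset_insert q Y)
  omega

lemma rank_union_eq_of_forall_rank_insert_eq {X S : Finset (SupIrreds L)}
    (h : ∀ q ∈ S, rank (insert q X) = rank X) : rank (X ∪ S) = rank X := by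
  induction S using Finset.induction_on with
  | empty => rw [union_empty]
  | insert q S _ ih =>
    rw [union_insert, rank_insert_eq_of_subset subset_union_left (h q (mem_insert_self q S)),
      ih fun r hr => h r (mem_insert_of_mem hr)]

lemma rank_closure (A : Finset (SupIrreds L)) : rank (closure A) = rank A := by
  rw [← union_eq_right.2 (subset_closure A)]
  exact rank_union_eq_of_forall_rank_insert_eq fun q hq => mem_closure.1 hq

lemma isFlat_closure (A : Finset (SupIrreds L)) : IsFlat (closure A) := fun q hq =>
  mem_closure.2 <| le_antisymm
    ((rank_mono (insert_subset_insert q (subset_closure A))).trans (hq.trans (rank_closure A)).le)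
    (rank_mono (subset_insert q A))

lemma closure_subset_of_isFlat {A F : Finset (SupIrreds L)} (hAF : A ⊆ F) (hF : IsFlat F) :
    closure A ⊆ F :=
  fun q hq => hF q (rank_insert_eq_of_subset hAF (mem_closure.1 hq))

lemma isFlat_supIrredBelow (x : L) : IsFlat (supIrredBelow x) := fun q hq => by
  by_contra hqx
  rw [mem_supIrredBelow] at hqx
  suffices grade ℕ x + 1 ≤ rank (insert q (supIrredBelow x)) by
    rw [hq, rank_supIrredBelow] at this
    omega
  refine le_rank fun z => ?_
  have hkey := grade_sup_finset_sup_le (isLowerSet_supIrredBelow x) z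
  rw [sup_supIrredBelow] at hkey
  by_cases hqz : (q : L) ≤ z
  · rw [insert_sdiff_of_mem _ (mem_supIrredBelow.2 hqz)]
    have hlt : x < z ⊔ x := lt_of_le_of_ne le_sup_right fun h => hqx (h ▸ le_sup_of_le_left hqz)
    have := grade_strictMono (𝕆 := ℕ) hlt
    omega
  · rw [insert_sdiff_of_notMem _ (mem_supIrredBelow.not.2 hqz),
      card_insert_of_notMem fun h => hqx (mem_supIrredBelow.1 (mem_sdiff.1 h).1)]
    have := grade_mono (𝕆 := ℕ) (le_sup_right : x ≤ z ⊔ x)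
    omega

noncomputable def flatClosure : ClosureOperator (Finset (SupIrreds L)) :=
  .ofPred closure IsFlat subset_closure isFlat_closure fun _ _ => closure_subset_of_isFlat

variable (L) in
abbrev Flats := (flatClosure (L := L)).Closeds

noncomputable instance : Lattice (Flats L) := flatClosure.gi.liftLattice

noncomputable instance : BoundedOrder (Flats L) := flatClosure.gi.liftBoundedOrder

noncomputable instance : Fintype (Flats L) := inferInstance

namespace Flats

lemma coe_sup (F G : Flats L) : ((F ⊔ G : Flats L) : Finset (SupIrreds L)) = closure (F ∪ G) :=
  rfl

lemma coe_inf (F G : Flats L) :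
    ((F ⊓ G : Flats L) : Finset (SupIrreds L)) = (F : Finset (SupIrreds L)) ∩ G :=
  rfl

lemma coe_top : ((⊤ : Flats L) : Finset (SupIrreds L)) = univ :=
  rfl

lemma coe_bot : ((⊥ : Flats L) : Finset (SupIrreds L)) = ∅ :=
  subset_empty.1 (closure_subset_of_isFlat (empty_subset _) isFlat_empty)

lemma rank_strictMono : StrictMono fun F : Flats L => rank (F : Finset (SupIrreds L)) :=
  fun F _ h => F.2.rank_lt_of_ssubset h

lemma rank_eq_add_one_of_covBy {F G : Flats L} (h : F ⋖ G) :
    rank (G : Finset (SupIrreds L)) = rank (F : Finset (SupIrreds L)) + 1 := by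
  obtain ⟨q, hqG, hqF⟩ := exists_of_ssubset (Subtype.coe_lt_coe.2 h.lt)
  let C : Flats L := flatClosure.toCloseds (insert q F)
  have hFC : F < C := lt_of_le_of_ne ((subset_insert q _).trans (subset_closure _))
    fun hFC => hqF (hFC ▸ subset_closure _ (mem_insert_self q _))
  have hCG : C ≤ G := closure_subset_of_isFlat (insert_subset hqG h.le) G.2
  rw [← (hCG.lt_or_eq).resolve_left (h.2 hFC)]
  have hC : rank (C : Finset (SupIrreds L)) = rank (insert q (F : Finset (SupIrreds L))) :=
    rank_closure _
  have := rank_insert_le (F : Finset (SupIrreds L)) q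
  have := rank_strictMono hFC
  simp only at this
  omega

noncomputable instance : GradeMinOrder ℕ (Flats L) where
  grade F := rank (F : Finset (SupIrreds L))
  grade_strictMono := rank_strictMono
  covBy_grade _ _ h := Nat.covBy_iff_add_one_eq.2 (rank_eq_add_one_of_covBy h).symm
  isMin_grade F hF := by
    rw [hF.eq_bot, coe_bot, rank_empty]
    exact isMin_bot

lemma grade_eq_rank (F : Flats L) : grade ℕ F = rank (F : Finset (SupIrreds L)) :=
  rfl

instance : IsUpperModularLattice (Flats L) :=
  .of_grade_sup_add_grade_inf_le fun F G => by
    simpa only [grade_eq_rank, coe_sup, coe_inf, rank_closure] using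
      rank_union_add_rank_inter_le (F : Finset (SupIrreds L)) G

def atom (q : SupIrreds L) : Flats L :=
  ⟨{q}, isFlat_singleton q⟩

lemma isAtom_atom (q : SupIrreds L) : IsAtom (atom q) := by
  refine ⟨fun h => ?_, fun F hF => Subtype.ext ?_⟩
  · simpa [atom, coe_bot] using congrArg Subtype.val h
  · rw [coe_bot]
    exact ssubset_singleton_iff.1 (Subtype.coe_lt_coe.2 hF)

lemma exists_atom_eq_of_isAtom {F : Flats L} (hF : IsAtom F) : ∃ q, atom q = F := by
  obtain ⟨q, hq⟩ := nonempty_iff_ne_empty.2 fun h => hF.1 (Subtype.ext (h.trans coe_bot.symm))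
  refine ⟨q, (hF.le_iff.1 (singleton_subset_iff.2 hq)).resolve_left (isAtom_atom q).1⟩

lemma isAtom_of_supIrred {F : Flats L} (hF : SupIrred F) : IsAtom F := by
  have hsup : (F : Finset (SupIrreds L)).sup atom = F :=
    le_antisymm (Finset.sup_le fun q hq => singleton_subset_iff.2 hq)
      fun q hq => (le_sup (f := atom) hq : atom q ≤ _) (mem_singleton_self q)
  obtain ⟨q, -, hq⟩ := hF.finset_sup_eq hsup
  exact hq ▸ isAtom_atom q

lemma card_isAtom : Nat.card {F : Flats L // IsAtom F} = Nat.card (SupIrreds L) := by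
  refine (Nat.card_eq_of_bijective (fun q => ⟨atom q, isAtom_atom q⟩)
    ⟨fun q q' h => ?_, ?_⟩).symm
  · simpa [atom] using congrArg (fun F : {F : Flats L // IsAtom F} => (F : Finset (SupIrreds L))) h
  · rintro ⟨F, hF⟩
    obtain ⟨q, rfl⟩ := exists_atom_eq_of_isAtom hF
    exact ⟨q, rfl⟩

end Flats

lemma closure_supIrredBelow_union (x y : L) :
    closure (supIrredBelow x ∪ supIrredBelow y) = supIrredBelow (x ⊔ y) := by
  have hsub := closure_subset_of_isFlat (union_subset (supIrredBelow_mono le_sup_left)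
    (supIrredBelow_mono le_sup_right)) (isFlat_supIrredBelow (x ⊔ y))
  have hlower : IsLowerSet (↑(supIrredBelow x ∪ supIrredBelow y) : Set (SupIrreds L)) := by
    rw [coe_union]
    exact (isLowerSet_supIrredBelow x).union (isLowerSet_supIrredBelow y)
  have hrank : grade ℕ (x ⊔ y) ≤ rank (supIrredBelow x ∪ supIrredBelow y) := by
    simpa only [sup_union, sup_supIrredBelow] using grade_finset_sup_le_rank hlower
  by_contra hne
  have := (isFlat_closure _).rank_lt_of_ssubset (hsub.ssubset_of_ne hne)
  rw [rank_closure, rank_supIrredBelow] at this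
  omega

noncomputable def toFlats : LatticeHom L (Flats L) where
  toFun x := ⟨supIrredBelow x, isFlat_supIrredBelow x⟩
  map_sup' x y := Subtype.ext (closure_supIrredBelow_union x y).symm
  map_inf' x y := Subtype.ext (supIrredBelow_inf x y)

lemma toFlats_injective : Function.Injective (toFlats (L := L)) :=
  fun _ _ h => supIrredBelow_injective (congrArg Subtype.val h)

lemma krullDim_flats [OrderTop L] : krullDim (Flats L) = krullDim L := by
  rw [krullDim_eq_grade_top, krullDim_eq_grade_top, Flats.grade_eq_rank, Flats.coe_top,
    ← supIrredBelow_top, rank_supIrredBelow]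

end SupIrredMatroid

/-- Every finite semimodular lattice `L` has a length-preserving lattice embedding
into a finite geometric lattice `K` whose number of atoms is `|Jir L|`. -/
theorem embed_geometric_card (L : Type u) [CompleteLattice L] [Fintype L]
    (hL : Semimodular L) :
    ∃ (K : Type u) (_ : CompleteLattice K) (_ : Fintype K),
      Semimodular K ∧
      -- `K` is geometric: every nonzero join-irreducible element is an atom
      (∀ a : K, SupIrred a → IsAtom a) ∧
      -- a length-preserving lattice embedding
      (∃ f : LatticeHom L K, Function.Injective f) ∧
      Order.krullDim K = Order.krullDim L ∧
      Nat.card {a : K // IsAtom a} = Nat.card {a : L // SupIrred a} := by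
  have : IsUpperModularLattice L := ⟨hL _ _⟩
  let _ := IsUpperModularLattice.gradeMinOrder L
  open SupIrredMatroid in
  exact ⟨Flats L, Fintype.toCompleteLattice _, inferInstance,
    fun _ _ => covBy_sup_of_inf_covBy_left, fun _ => Flats.isAtom_of_supIrred,
    ⟨toFlats, toFlats_injective⟩, krullDim_flats, Flats.card_isAtom⟩
end

section
/- Every finite semimodular lattice has a length-preserving embedding into a finite geometric lattice. -/
/-!
Give every element `x` of the finite semimodular lattice `L` exactly `rank x` parallel copies,
where `rank` is the common length of all maximal chains from `⊥` (Jordan–Hölder, which is where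
semimodularity enters), and on the set `E` of all copies use
`ρ S = min_A (rank (⨆ A) + #{e ∈ S | e is not a copy of an element of A})`.
Since `rank` is submodular, `ρ` is a matroid rank function, so the flats of `ρ` form a finite
geometric lattice of length `ρ E = rank ⊤`. Sending `x` to the set of copies of the elements
below `x` is a lattice embedding: this set is a flat of rank `rank x`, and the copies below `x`
or `y` have rank `rank (x ⊔ y)`, so their closure is the set of copies below `x ⊔ y`.
-/

universe u

open Finset Order
open scoped Classical

noncomputable section

variable {α : Type*}

inductive CovByChain [LT α] : α → α → ℕ → Prop
  | refl (a : α) : CovByChain a a 0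
  | cons {a b c : α} {n : ℕ} : a ⋖ b → CovByChain b c n → CovByChain a c (n + 1)

namespace CovByChain

variable [PartialOrder α] {a b c : α} {m n : ℕ}

theorem le (h : CovByChain a b n) : a ≤ b := by
  induction h with
  | refl => exact le_rfl
  | cons hab _ ih => exact hab.le.trans ih

theorem eq_of_length_eq_zero (h : CovByChain a b 0) : a = b := by
  cases h
  rfl

theorem lt (h : CovByChain a b (n + 1)) : a < b := by
  cases h with
  | cons hac hcb => exact hac.lt.trans_le hcb.le

theorem single (h : a ⋖ b) : CovByChain a b 1 := cons h (refl b)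

theorem trans (h₁ : CovByChain a b m) (h₂ : CovByChain b c n) : CovByChain a c (m + n) := by
  induction h₁ with
  | refl => simpa using h₂
  | cons hab _ ih => rw [Nat.add_right_comm]; exact cons hab (ih h₂)

theorem height_add_le (h : CovByChain a b n) : height a + n ≤ height b := by
  induction h with
  | refl => simp
  | @cons a b c n hab _ ih =>
    calc height a + ↑(n + 1) = height a + 1 + n := by push_cast; ring
      _ ≤ height b + n := by gcongr; exact height_add_one_le hab.lt
      _ ≤ height c := ih

end CovByChain

theorem exists_covByChain [PartialOrder α] [Finite α] {a b : α} (h : a ≤ b) :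
    ∃ n, CovByChain a b n := by
  induction a using WellFoundedGT.induction with
  | _ a ih =>
    rcases h.eq_or_lt with rfl | hab
    · exact ⟨0, .refl a⟩
    · obtain ⟨c, hac, hcb⟩ := exists_covBy_le_of_lt hab
      obtain ⟨n, hn⟩ := ih c hac.lt hcb
      exact ⟨n + 1, .cons hac hn⟩

section UpperModular

variable [Lattice α] [IsUpperModularLattice α]

theorem CovByChain.length_eq [Finite α] {a b : α} {m n : ℕ} (h₁ : CovByChain a b m)
    (h₂ : CovByChain a b n) : m = n := by
  induction m generalizing a n with
  | zero =>
    cases h₁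
    cases n with
    | zero => rfl
    | succ n => exact absurd h₂.lt (lt_irrefl _)
  | succ m ih =>
    rcases h₁ with _ | @⟨_, c, _, _, hac, hcb⟩
    rcases h₂ with _ | @⟨_, d, _, n, had, hdb⟩
    · exact absurd (hac.lt.trans_le hcb.le) (lt_irrefl _)
    by_cases hcd : c = d
    · subst hcd
      rw [ih hcb hdb]
    -- two distinct covers of `a` are both covered by their join
    have hinf : c ⊓ d = a := hac.wcovBy.inf_eq had.wcovBy hcd
    have hc : c ⋖ c ⊔ d := covBy_sup_of_inf_covBy_right (hinf ▸ had)
    have hd : d ⋖ c ⊔ d := covBy_sup_of_inf_covBy_left (hinf ▸ hac)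
    obtain ⟨k, hk⟩ := exists_covByChain (sup_le hcb.le hdb.le)
    obtain rfl : m = k + 1 := ih hcb (.cons hc hk)
    rw [ih (.cons hd hk) hdb]

theorem CovBy.sup_wcovBy_sup {a c : α} (h : a ⋖ c) (y : α) : a ⊔ y ⩿ c ⊔ y := by
  have hcy : c ⊔ y = c ⊔ (a ⊔ y) := by rw [← sup_assoc, sup_eq_left.2 h.le]
  rw [hcy]
  by_cases hc : c ≤ a ⊔ y
  · rw [sup_eq_right.2 hc]
    exact .refl _
  · have hinf : c ⊓ (a ⊔ y) = a :=
      ((h.eq_or_eq (le_inf h.le le_sup_left) inf_le_left).resolve_right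
        fun heq => hc (inf_eq_left.1 heq))
    rw [← hinf] at h
    exact (covBy_sup_of_inf_covBy_left h).wcovBy

end UpperModular

theorem krullDim_le_of_strictMono_nat [Preorder α] {r : α → ℕ} (hr : StrictMono r) {n : ℕ}
    (hn : ∀ a, r a ≤ n) : krullDim α ≤ n := by
  refine iSup_le fun p => ?_
  have := (p.map r hr).head_add_length_le_nat
  have := hn p.last
  simp only [LTSeries.head_map, LTSeries.last_map] at *
  exact_mod_cast (by omega : (p.map r hr).length ≤ n)

theorem StrictMono.covBy_of_eq_add_one [Preorder α] {r : α → ℕ} (hr : StrictMono r) {a b : α}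
    (hab : a < b) (h : r b = r a + 1) : a ⋖ b :=
  ⟨hab, fun c hac hcb => by have := hr hac; have := hr hcb; omega⟩

theorem IsUpperModularLattice.of_rank [Lattice α] {r : α → ℕ} (hr : StrictMono r)
    (hcov : ∀ a b : α, a ⋖ b → r b = r a + 1)
    (hsub : ∀ a b : α, r (a ⊔ b) + r (a ⊓ b) ≤ r a + r b) : IsUpperModularLattice α where
  covBy_sup_of_inf_covBy {a b} h := by
    have hb : b < a ⊔ b := le_sup_right.lt_of_ne fun heq =>
      h.lt.ne (inf_eq_left.2 (le_sup_left.trans heq.ge))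
    have := hcov _ _ h
    have := hsub a b
    have := hr hb
    exact hr.covBy_of_eq_add_one hb (by omega)

section Rank

variable [PartialOrder α] [OrderBot α] [Finite α]

def chainRank (x : α) : ℕ := (exists_covByChain (bot_le (a := x))).choose

theorem covByChain_chainRank (x : α) : CovByChain ⊥ x (chainRank x) :=
  (exists_covByChain bot_le).choose_spec

end Rank

section UpperModularRank

variable [Lattice α] [OrderBot α] [Finite α] [IsUpperModularLattice α] {x y : α} {n : ℕ}

theorem chainRank_eq_of_covByChain (h : CovByChain ⊥ x n) : chainRank x = n :=
  (covByChain_chainRank x).length_eq h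

theorem CovByChain.chainRank_eq_add (h : CovByChain x y n) : chainRank y = chainRank x + n :=
  chainRank_eq_of_covByChain ((covByChain_chainRank x).trans h)

@[simp]
theorem chainRank_bot : chainRank (⊥ : α) = 0 := chainRank_eq_of_covByChain (.refl ⊥)

theorem CovBy.chainRank_eq (h : x ⋖ y) : chainRank y = chainRank x + 1 :=
  (CovByChain.single h).chainRank_eq_add

theorem WCovBy.chainRank_le (h : x ⩿ y) : chainRank y ≤ chainRank x + 1 := by
  rcases h.eq_or_covBy with rfl | h
  · omega
  · exact h.chainRank_eq.le

theorem chainRank_strictMono : StrictMono (chainRank : α → ℕ) := by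
  intro x y hxy
  obtain ⟨_ | n, h⟩ := exists_covByChain hxy.le
  · exact absurd h.eq_of_length_eq_zero hxy.ne
  · rw [h.chainRank_eq_add]
    omega

theorem chainRank_pos (hx : x ≠ ⊥) : 0 < chainRank x :=
  chainRank_bot (α := α) ▸ chainRank_strictMono (bot_lt_iff_ne_bot.2 hx)

theorem CovByChain.chainRank_sup_le {a b : α} (h : CovByChain a b n) (y : α) :
    chainRank (b ⊔ y) ≤ chainRank (a ⊔ y) + n := by
  induction h with
  | refl => omega
  | cons hab _ ih =>
    have := (hab.sup_wcovBy_sup y).chainRank_le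
    omega

theorem chainRank_sup_add_chainRank_inf_le (x y : α) :
    chainRank (x ⊔ y) + chainRank (x ⊓ y) ≤ chainRank x + chainRank y := by
  obtain ⟨n, h⟩ := exists_covByChain (inf_le_left : x ⊓ y ≤ x)
  have := h.chainRank_sup_le y
  rw [sup_eq_right.2 (inf_le_right : x ⊓ y ≤ y)] at this
  have := h.chainRank_eq_add
  omega

theorem chainRank_sup_finset_sup_le (x : α) (C : Finset α) :
    chainRank (x ⊔ C.sup id) ≤ chainRank x + ∑ y ∈ C, chainRank y := by
  induction C using Finset.induction_on with
  | empty => simp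
  | insert a C ha ih =>
    rw [sup_insert, sum_insert ha, id, sup_left_comm]
    have := chainRank_sup_add_chainRank_inf_le a (x ⊔ C.sup id)
    omega

theorem krullDim_eq_chainRank_top [OrderTop α] : krullDim α = chainRank (⊤ : α) := by
  refine le_antisymm (krullDim_le_of_strictMono_nat chainRank_strictMono
    fun x => chainRank_strictMono.monotone le_top) ?_
  rw [← height_top_eq_krullDim]
  have := (covByChain_chainRank (⊤ : α)).height_add_le
  rw [height_bot, zero_add] at this
  exact_mod_cast this

end UpperModularRank

structure MatroidRank (E : Type*) [DecidableEq E] where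
  r : Finset E → ℕ
  r_empty : r ∅ = 0
  r_mono : Monotone r
  r_insert_le : ∀ e S, r (insert e S) ≤ r S + 1
  r_union_add_r_inter_le : ∀ S T, r (S ∪ T) + r (S ∩ T) ≤ r S + r T

namespace MatroidRank

variable {E : Type*} [DecidableEq E] (M : MatroidRank E) {S T F G : Finset E} {e : E}

theorem r_insert_eq_of_subset (h : M.r (insert e S) = M.r S) (hST : S ⊆ T) :
    M.r (insert e T) = M.r T := by
  have := M.r_union_add_r_inter_le (insert e S) T
  rw [insert_union, union_eq_right.2 hST] at this
  have := M.r_mono (subset_inter (subset_insert e S) hST)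
  have := M.r_mono (subset_insert e T)
  omega

def IsFlat (F : Finset E) : Prop := ∀ e ∉ F, M.r F < M.r (insert e F)

variable {M} in
theorem IsFlat.inter (hF : M.IsFlat F) (hG : M.IsFlat G) : M.IsFlat (F ∩ G) := by
  intro e he
  by_contra! h
  have h : M.r (insert e (F ∩ G)) = M.r (F ∩ G) :=
    h.antisymm (M.r_mono (subset_insert e _))
  rw [mem_inter, not_and_or] at he
  rcases he with he | he
  · have := M.r_insert_eq_of_subset h inter_subset_left
    have := hF e he
    omega
  · have := M.r_insert_eq_of_subset h inter_subset_right
    have := hG e he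
    omega

abbrev Flat : Type _ := {F : Finset E // M.IsFlat F}

theorem r_flat_strictMono : StrictMono fun F : M.Flat => M.r F.1 := by
  intro F G hFG
  obtain ⟨e, heG, heF⟩ := exists_of_ssubset (show F.1 ⊂ G.1 from hFG)
  exact (F.2 e heF).trans_le (M.r_mono (insert_subset heG hFG.le))

variable [Fintype E]

def closure (S : Finset E) : Finset E :=
  univ.filter fun e => M.r (insert e S) = M.r S

theorem mem_closure : e ∈ M.closure S ↔ M.r (insert e S) = M.r S := by simp [closure]

theorem subset_closure (S : Finset E) : S ⊆ M.closure S := fun e he => by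
  rw [mem_closure, insert_eq_of_mem he]

theorem r_union_eq_of_subset_closure (h : T ⊆ M.closure S) : M.r (S ∪ T) = M.r S := by
  induction T using Finset.induction_on with
  | empty => rw [union_empty]
  | insert e T _ ih =>
    rw [insert_subset_iff, mem_closure] at h
    rw [union_insert, M.r_insert_eq_of_subset h.1 subset_union_left, ih h.2]

@[simp]
theorem r_closure (S : Finset E) : M.r (M.closure S) = M.r S := by
  rw [← M.r_union_eq_of_subset_closure (S := S) (T := M.closure S) subset_rfl,
    union_eq_right.2 (M.subset_closure S)]

theorem isFlat_closure (S : Finset E) : M.IsFlat (M.closure S) := by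
  intro e he
  rw [mem_closure] at he
  have := M.r_mono (insert_subset_insert e (M.subset_closure S))
  have := M.r_insert_le e S
  have := M.r_mono (subset_insert e S)
  rw [r_closure]
  omega

theorem closure_subset (hSF : S ⊆ F) (hF : M.IsFlat F) : M.closure S ⊆ F := by
  intro e he
  by_contra heF
  have := M.r_insert_eq_of_subset ((M.mem_closure).1 he) hSF
  have := hF e heF
  omega

theorem closure_eq_of_r_eq (hSF : S ⊆ F) (hF : M.IsFlat F) (h : M.r S = M.r F) :
    M.closure S = F := by
  refine (M.closure_subset hSF hF).antisymm fun e he => ?_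
  rw [mem_closure]
  have := M.r_mono (insert_subset he hSF)
  have := M.r_mono (subset_insert e S)
  omega

theorem isFlat_univ : M.IsFlat univ := fun e he => absurd (mem_univ e) he

instance : Lattice M.Flat where
  sup F G := ⟨M.closure (F.1 ∪ G.1), M.isFlat_closure _⟩
  inf F G := ⟨F.1 ∩ G.1, F.2.inter G.2⟩
  le_sup_left _ _ := subset_union_left.trans (M.subset_closure _)
  le_sup_right _ _ := subset_union_right.trans (M.subset_closure _)
  sup_le _ _ H hF hG := M.closure_subset (union_subset hF hG) H.2
  inf_le_left _ _ := inter_subset_left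
  inf_le_right _ _ := inter_subset_right
  le_inf _ _ _ hG hH := subset_inter hG hH

instance : BoundedOrder M.Flat where
  top := ⟨univ, M.isFlat_univ⟩
  le_top F := subset_univ F.1
  bot := ⟨M.closure ∅, M.isFlat_closure ∅⟩
  bot_le F := M.closure_subset (empty_subset _) F.2

theorem coe_sup (F G : M.Flat) : (F ⊔ G).1 = M.closure (F.1 ∪ G.1) := rfl
theorem coe_inf (F G : M.Flat) : (F ⊓ G).1 = F.1 ∩ G.1 := rfl
theorem coe_bot : (⊥ : M.Flat).1 = M.closure ∅ := rfl

theorem r_flat_eq_of_covBy {F G : M.Flat} (h : F ⋖ G) : M.r G.1 = M.r F.1 + 1 := by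
  obtain ⟨e, heG, heF⟩ := exists_of_ssubset (show F.1 ⊂ G.1 from h.lt)
  let H : M.Flat := ⟨M.closure (insert e F.1), M.isFlat_closure _⟩
  have hFH : F < H := lt_of_le_of_ne ((subset_insert e F.1).trans (M.subset_closure _))
    fun hFH => heF (hFH ▸ M.subset_closure _ (mem_insert_self e F.1))
  have hHG : H ≤ G := M.closure_subset (insert_subset heG h.le) G.2
  obtain rfl : H = G := (h.eq_or_eq hFH.le hHG).resolve_left hFH.ne'
  have := F.2 e heF
  have := M.r_insert_le e F.1
  simp only [H, r_closure]
  omega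

instance : IsUpperModularLattice M.Flat :=
  .of_rank M.r_flat_strictMono (fun _ _ => M.r_flat_eq_of_covBy) fun F G => by
    simpa only [coe_sup, coe_inf, r_closure] using M.r_union_add_r_inter_le F.1 G.1

theorem isAtom_of_supIrred {F : M.Flat} (hF : SupIrred F) : IsAtom F := by
  let pt : E → M.Flat := fun e => ⟨M.closure {e}, M.isFlat_closure _⟩
  have hsup : F.1.sup pt = F := by
    refine le_antisymm (Finset.sup_le fun e he => M.closure_subset (singleton_subset_iff.2 he) F.2)
      fun e he => ?_
    exact (le_sup (f := pt) he : pt e ≤ _) (M.subset_closure _ (mem_singleton_self e))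
  obtain ⟨e, -, rfl⟩ := hF.finset_sup_eq hsup
  have hbot : ⊥ < pt e := bot_lt_iff_ne_bot.2 hF.ne_bot
  refine bot_covBy_iff.1 (M.r_flat_strictMono.covBy_of_eq_add_one hbot ?_)
  have h₁ : M.r {e} ≤ 1 := by simpa [M.r_empty] using M.r_insert_le e ∅
  have h₂ := M.r_flat_strictMono hbot
  simp only [pt, coe_bot, r_closure, M.r_empty] at h₂ ⊢
  omega

theorem krullDim_flat_le : krullDim M.Flat ≤ M.r univ :=
  krullDim_le_of_strictMono_nat M.r_flat_strictMono fun F => M.r_mono (subset_univ F.1)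

end MatroidRank

theorem Finset.card_sdiff_union_add_card_sdiff_inter_le {β : Type*} [DecidableEq β]
    (S T P Q : Finset β) :
    #((S ∪ T) \ (P ∪ Q)) + #((S ∩ T) \ (P ∩ Q)) ≤ #(S \ P) + #(T \ Q) := by
  rw [← card_union_add_card_inter ((S ∪ T) \ (P ∪ Q)), ← card_union_add_card_inter (S \ P)]
  apply add_le_add <;> apply card_le_card <;> intro e <;>
    simp only [mem_union, mem_inter, mem_sdiff] <;> tauto

abbrev Expansion (α : Type*) [PartialOrder α] [OrderBot α] [Finite α] : Type _ :=
  Σ x : α, Fin (chainRank x)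

section Expansion

variable [Lattice α] [OrderBot α] [Fintype α]

def fiber (C : Finset α) : Finset (Expansion α) := C.sigma fun _ => univ

@[simp]
theorem mem_fiber {C : Finset α} {e : Expansion α} : e ∈ fiber C ↔ e.1 ∈ C := by
  simp [fiber]

theorem card_fiber (C : Finset α) : #(fiber C) = ∑ y ∈ C, chainRank y := by
  simp [fiber]

theorem fiber_sdiff (C A : Finset α) : fiber C \ fiber A = fiber (C \ A) := by
  ext; simp

theorem fiber_union (A B : Finset α) : fiber (A ∪ B) = fiber A ∪ fiber B := by
  ext; simp

theorem fiber_inter (A B : Finset α) : fiber (A ∩ B) = fiber A ∩ fiber B := by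
  ext; simp

def expansionCost (A : Finset α) (S : Finset (Expansion α)) : ℕ :=
  chainRank (A.sup id) + #(S \ fiber A)

def expansionRank (S : Finset (Expansion α)) : ℕ :=
  univ.inf' univ_nonempty fun A => expansionCost A S

theorem expansionRank_le (A : Finset α) (S : Finset (Expansion α)) :
    expansionRank S ≤ expansionCost A S :=
  inf'_le _ (mem_univ A)

theorem le_expansionRank {S : Finset (Expansion α)} {n : ℕ}
    (h : ∀ A, n ≤ expansionCost A S) : n ≤ expansionRank S :=
  le_inf' _ _ fun A _ => h A

theorem exists_expansionRank_eq (S : Finset (Expansion α)) :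
    ∃ A, expansionRank S = expansionCost A S := by
  obtain ⟨A, -, hA⟩ := exists_mem_eq_inf' univ_nonempty fun A => expansionCost A S
  exact ⟨A, hA⟩

theorem expansionRank_mono : Monotone (expansionRank : Finset (Expansion α) → ℕ) := by
  intro S T hST
  obtain ⟨A, hA⟩ := exists_expansionRank_eq T
  refine (expansionRank_le A S).trans ?_
  rw [hA, expansionCost, expansionCost]
  gcongr

theorem expansionRank_insert_le (e : Expansion α) (S : Finset (Expansion α)) :
    expansionRank (insert e S) ≤ expansionRank S + 1 := by
  obtain ⟨A, hA⟩ := exists_expansionRank_eq S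
  refine (expansionRank_le A _).trans ?_
  rw [hA, expansionCost, expansionCost, add_assoc]
  gcongr
  by_cases he : e ∈ fiber A
  · rw [insert_sdiff_of_mem _ he]
    omega
  · rw [insert_sdiff_of_notMem _ he]
    exact card_insert_le _ _

variable [IsUpperModularLattice α]

theorem expansionRank_union_add_inter_le (S T : Finset (Expansion α)) :
    expansionRank (S ∪ T) + expansionRank (S ∩ T) ≤ expansionRank S + expansionRank T := by
  obtain ⟨A, hA⟩ := exists_expansionRank_eq S
  obtain ⟨B, hB⟩ := exists_expansionRank_eq T
  have hU := expansionRank_le (A ∪ B) (S ∪ T)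
  have hI := expansionRank_le (A ∩ B) (S ∩ T)
  have hrank : chainRank ((A ∪ B).sup id) + chainRank ((A ∩ B).sup id) ≤
      chainRank (A.sup id) + chainRank (B.sup id) := by
    rw [sup_union]
    have := chainRank_strictMono.monotone
      (le_inf (sup_mono inter_subset_left) (sup_mono inter_subset_right) :
        (A ∩ B).sup id ≤ A.sup id ⊓ B.sup id)
    have := chainRank_sup_add_chainRank_inf_le (A.sup id) (B.sup id)
    omega
  have hcard := card_sdiff_union_add_card_sdiff_inter_le S T (fiber A) (fiber B)
  rw [← fiber_union, ← fiber_inter] at hcard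
  rw [hA, hB]
  simp only [expansionCost] at *
  omega

theorem chainRank_sup_le_expansionCost (A C : Finset α) :
    chainRank (A.sup id ⊔ C.sup id) ≤ expansionCost A (fiber C) := by
  rw [expansionCost, fiber_sdiff, card_fiber, ← sup_union, ← union_sdiff_self_eq_union,
    sup_union]
  exact chainRank_sup_finset_sup_le _ _

theorem expansionRank_fiber (C : Finset α) : expansionRank (fiber C) = chainRank (C.sup id) := by
  refine le_antisymm ((expansionRank_le C _).trans (by simp [expansionCost]))
    (le_expansionRank fun A => ?_)
  exact (chainRank_strictMono.monotone le_sup_right).trans (chainRank_sup_le_expansionCost A C)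

def expansionMatroid : MatroidRank (Expansion α) where
  r := expansionRank
  r_empty := Nat.le_zero.1 ((expansionRank_le ∅ ∅).trans (by simp [expansionCost]))
  r_mono := expansionRank_mono
  r_insert_le := expansionRank_insert_le
  r_union_add_r_inter_le := expansionRank_union_add_inter_le

end Expansion

section LowerFiber

variable [Lattice α] [OrderBot α] [Fintype α]

def lowerFiber (x : α) : Finset (Expansion α) := fiber (univ.filter (· ≤ x))

@[simp]
theorem mem_lowerFiber {x : α} {e : Expansion α} : e ∈ lowerFiber x ↔ e.1 ≤ x := by
  simp [lowerFiber]

theorem sup_id_filter_le (x : α) : (univ.filter (· ≤ x)).sup id = x :=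
  le_antisymm (Finset.sup_le fun _ hy => (mem_filter.1 hy).2)
    (le_sup (f := id) (mem_filter.2 ⟨mem_univ x, le_rfl⟩))

theorem lowerFiber_inf (x y : α) : lowerFiber (x ⊓ y) = lowerFiber x ∩ lowerFiber y := by
  ext; simp

theorem lowerFiber_top [OrderTop α] : lowerFiber (⊤ : α) = univ := by
  ext; simp

variable [IsUpperModularLattice α]

theorem expansionRank_lowerFiber (x : α) : expansionRank (lowerFiber x) = chainRank x := by
  rw [lowerFiber, expansionRank_fiber, sup_id_filter_le]

theorem expansionRank_lowerFiber_union (x y : α) :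
    expansionRank (lowerFiber x ∪ lowerFiber y) = chainRank (x ⊔ y) := by
  rw [lowerFiber, lowerFiber, ← fiber_union, expansionRank_fiber, sup_union, sup_id_filter_le,
    sup_id_filter_le]

theorem isFlat_lowerFiber (x : α) : expansionMatroid.IsFlat (lowerFiber x) := by
  intro e he
  rw [mem_lowerFiber] at he
  change expansionRank (lowerFiber x) < expansionRank (insert e (lowerFiber x))
  rw [expansionRank_lowerFiber]
  refine le_expansionRank fun A => ?_
  have key := chainRank_sup_le_expansionCost A (univ.filter (· ≤ x))
  rw [sup_id_filter_le, ← lowerFiber] at key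
  rw [expansionCost] at key ⊢
  by_cases hA : e.1 ∈ A
  · rw [insert_sdiff_of_mem _ (mem_fiber.2 hA)]
    have : x < A.sup id ⊔ x :=
      right_lt_sup.2 fun hAx => he ((le_sup (f := id) hA).trans hAx)
    have := chainRank_strictMono this
    omega
  · rw [insert_sdiff_of_notMem _ (mt mem_fiber.1 hA),
      card_insert_of_notMem fun h => he (mem_lowerFiber.1 (mem_sdiff.1 h).1)]
    have := chainRank_strictMono.monotone (le_sup_right : x ≤ A.sup id ⊔ x)
    omega

def toFlat : LatticeHom α (expansionMatroid (α := α)).Flat where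
  toFun x := ⟨lowerFiber x, isFlat_lowerFiber x⟩
  map_sup' x y := Subtype.ext <| Eq.symm <| expansionMatroid.closure_eq_of_r_eq
    (union_subset (fun _ he => mem_lowerFiber.2 (le_sup_of_le_left (mem_lowerFiber.1 he)))
      fun _ he => mem_lowerFiber.2 (le_sup_of_le_right (mem_lowerFiber.1 he)))
    (isFlat_lowerFiber _)
    ((expansionRank_lowerFiber_union x y).trans (expansionRank_lowerFiber _).symm)
  map_inf' x y := Subtype.ext (lowerFiber_inf x y)

theorem toFlat_le_toFlat_iff {x y : α} : toFlat x ≤ toFlat y ↔ x ≤ y := by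
  refine ⟨fun h => ?_, fun h e he => mem_lowerFiber.2 ((mem_lowerFiber.1 he).trans h)⟩
  rcases eq_or_ne x ⊥ with rfl | hx
  · exact bot_le
  · have hmem : ⟨x, ⟨0, chainRank_pos hx⟩⟩ ∈ lowerFiber x := mem_lowerFiber.2 le_rfl
    exact mem_lowerFiber.1 (h hmem)

theorem toFlat_injective :
    Function.Injective (toFlat : α → (expansionMatroid (α := α)).Flat) :=
  fun _ _ h => le_antisymm (toFlat_le_toFlat_iff.1 h.le) (toFlat_le_toFlat_iff.1 h.ge)

theorem toFlat_strictMono : StrictMono (toFlat : α → (expansionMatroid (α := α)).Flat) :=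
  strictMono_of_le_iff_le fun _ _ => toFlat_le_toFlat_iff.symm

end LowerFiber

end

/-- Every finite semimodular lattice has a length-preserving lattice embedding into a
finite geometric lattice. -/
theorem embed_geometric (L : Type u) [CompleteLattice L] [Fintype L]
    (hL : Semimodular L) :
    ∃ (K : Type u) (_ : CompleteLattice K) (_ : Fintype K),
      Semimodular K ∧
      -- `K` is geometric: every nonzero join-irreducible element is an atom
      (∀ a : K, SupIrred a → IsAtom a) ∧
      -- a length-preserving lattice embedding
      (∃ f : LatticeHom L K, Function.Injective f) ∧
      Order.krullDim K = Order.krullDim L := by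
  have : IsUpperModularLattice L := ⟨hL _ _⟩
  let _ : CompleteLattice (expansionMatroid (α := L)).Flat := Fintype.toCompleteLattice _
  refine ⟨expansionMatroid.Flat, inferInstance, inferInstance,
    fun _ _ => covBy_sup_of_inf_covBy_left, fun _ => expansionMatroid.isAtom_of_supIrred,
    ⟨toFlat, toFlat_injective⟩, ?_⟩
  refine le_antisymm ?_ (krullDim_le_of_strictMono _ toFlat_strictMono)
  rw [krullDim_eq_chainRank_top (α := L), ← expansionRank_lowerFiber, lowerFiber_top]
  exact MatroidRank.krullDim_flat_le _
end

section
/- Let L be a finite semimodular lattice with associated Faigle geometry (P, F) = Geom(L), and let a ∈ P be a maximal element of Jir(L) \ At(L). Define Q on the same underlying set by x <_Q y iff a ∉ {x, y} and x <_P y. Let T := {X ∈ F : a ∉ X and for all Y ∈ F, X ≺ Y implies a ∉ Y}, N := {X ∪ {a} : X ∈ T}, and G := F ∪ N. Then (Q, G) is a Faigle geometry. -/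
set_option linter.unusedSectionVars false
set_option linter.unusedVariables false
set_option maxHeartbeats 1000000

/-- The modified order `≤_Q`: `x ≤_Q y` iff `x = y`, or `x <_P y` and `a ∉ {x, y}`. -/
def leQ {P : Type*} [PartialOrder P] (a x y : P) : Prop :=
  x = y ∨ (x < y ∧ x ≠ a ∧ y ≠ a)

/-- `X` is a down-set with respect to the order `≤_Q`. -/
def QDownSet {P : Type*} [PartialOrder P] (a : P) (X : Set P) : Prop :=
  ∀ ⦃x⦄, x ∈ X → ∀ ⦃y⦄, leQ a y x → y ∈ X

namespace FaigleAux

variable {L : Type*} [CompleteLattice L] [Fintype L]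

lemma sSup_eq_finite_sup (S : Set L) : sSup S = (Set.toFinite S).toFinset.sup id := by
  apply le_antisymm
  · exact sSup_le fun b hb => Finset.le_sup (f := id) ((Set.toFinite S).mem_toFinset.2 hb)
  · exact Finset.sup_le fun b hb => le_sSup ((Set.toFinite S).mem_toFinset.1 hb)

lemma mem_of_sSup {a : L} (ha : SupIrred a) {S : Set L} (h : sSup S = a) : a ∈ S := by
  rw [sSup_eq_finite_sup] at h
  obtain ⟨b, hb, hba⟩ := ha.finset_sup_eq h
  rw [id] at hba
  subst hba
  exact (Set.toFinite S).mem_toFinset.1 hb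

lemma sSup_supIrred_le (x : L) : sSup {p : L | SupIrred p ∧ p ≤ x} = x := by
  apply le_antisymm (sSup_le fun p hp => hp.2)
  obtain ⟨s, hs, hirr⟩ := exists_supIrred_decomposition x
  conv_lhs => rw [← hs]
  exact Finset.sup_le fun b hb => le_sSup ⟨hirr hb, hs ▸ Finset.le_sup (f := id) hb⟩

/-- the set of sup-irreducibles below `x` -/
def FD (x : L) : Set {p : L // SupIrred p} := {p | p.1 ≤ x}

lemma mem_FD {x : L} {p : {p : L // SupIrred p}} : p ∈ FD x ↔ p.1 ≤ x := Iff.rfl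

lemma FD_le_of_subset {x y : L} (h : FD x ⊆ FD y) : x ≤ y := by
  conv_lhs => rw [← sSup_supIrred_le x]
  exact sSup_le fun p hp => h (show (⟨p, hp.1⟩ : {p : L // SupIrred p}) ∈ FD x from hp.2)

@[simp] lemma FD_subset_iff {x y : L} : FD x ⊆ FD y ↔ x ≤ y :=
  ⟨FD_le_of_subset, fun h p hp => le_trans hp h⟩

lemma FD_inj {x y : L} (h : FD x = FD y) : x = y :=
  le_antisymm (FD_le_of_subset h.le) (FD_le_of_subset h.ge)

@[simp] lemma FD_ssubset_iff {x y : L} : FD x ⊂ FD y ↔ x < y := by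
  constructor
  · rintro ⟨h1, h2⟩
    exact lt_of_le_of_ne (FD_le_of_subset h1) (fun h => h2 (h ▸ le_refl _))
  · rintro h
    exact ⟨FD_subset_iff.2 h.le, fun hs => h.ne (FD_inj (le_antisymm (FD_subset_iff.2 h.le) hs))⟩

lemma FD_inter {x y : L} : FD x ∩ FD y = FD (x ⊓ y) := by
  ext p; simp [mem_FD, le_inf_iff]

lemma FD_top : FD (⊤ : L) = Set.univ := by ext p; simp [mem_FD]

lemma FD_bot : FD (⊥ : L) = ∅ := by
  ext p; simp only [mem_FD, le_bot_iff, Set.mem_empty_iff_false, iff_false]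
  exact p.2.ne_bot

/-- the lower cover of an element -/
def lcov (u : L) : L := sSup {z | z < u}

lemma le_lcov {z u : L} (h : z < u) : z ≤ lcov u := le_sSup h

lemma lcov_lt {u : L} (hu : SupIrred u) : lcov u < u := by
  refine lt_of_le_of_ne (sSup_le fun z hz => hz.le) fun h => ?_
  exact lt_irrefl u (mem_of_sSup hu (S := {z | z < u}) h)

lemma lcov_covBy {u : L} (hu : SupIrred u) : lcov u ⋖ u :=
  ⟨lcov_lt hu, fun c hc hcu => hc.not_ge (le_lcov hcu)⟩

lemma exists_covBy_between {x w : L} (h : x < w) : ∃ v, x ⋖ v ∧ v ≤ w := by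
  obtain ⟨m, ⟨hm1, hm2⟩, hmin⟩ :=
    (wellFounded_lt (α := L)).has_min {v | x < v ∧ v ≤ w} ⟨w, h, le_refl w⟩
  exact ⟨m, ⟨hm1, fun c hc1 hc2 => hmin c ⟨hc1, hc2.le.trans hm2⟩ hc2⟩, hm2⟩

/-- `x` has no cover containing `a` (and `a ≰ x`) -/
def Tp (a x : L) : Prop := ¬ a ≤ x ∧ ¬ x ⋖ x ⊔ a

lemma cover_eq_sup {x z a : L} (hax : ¬ a ≤ x) (hxz : x ⋖ z) (haz : a ≤ z) : z = x ⊔ a := by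
  rcases hxz.eq_or_eq le_sup_left (sup_le hxz.lt.le haz) with h | h
  · exact absurd (h ▸ (le_sup_right : a ≤ x ⊔ a)) hax
  · exact h.symm

lemma star (hL : Semimodular L) {x y z : L} (hxy : x ⋖ y) (hxz : x ≤ z) (hyz : ¬ y ≤ z) :
    z ⋖ z ⊔ y := by
  rcases hxy.eq_or_eq (le_inf hxy.lt.le hxz) inf_le_left with h | h
  · have h2 : y ⊓ z ⋖ y := by rw [h]; exact hxy
    have := hL y z h2
    rwa [sup_comm] at this
  · exact absurd (inf_eq_left.1 h) hyz

lemma Tp.inf_right (hL : Semimodular L) {a x : L} (hT : Tp a x) (y : L) : Tp a (x ⊓ y) := by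
  constructor
  · exact fun h => hT.1 (h.trans inf_le_left)
  · intro hc
    have hwx : ¬ (x ⊓ y ⊔ a) ≤ x := fun h => hT.1 ((le_sup_right : a ≤ x ⊓ y ⊔ a).trans h)
    have hstar := star hL hc inf_le_left hwx
    have he : x ⊔ (x ⊓ y ⊔ a) = x ⊔ a := by rw [← sup_assoc, sup_inf_self]
    rw [he] at hstar
    exact hT.2 hstar

lemma covTa (hL : Semimodular L) {a t : L} (haj : SupIrred a) (hTt : Tp a t)
    (h't : lcov a ≤ t) : False := by
  have hlt : a ⊓ t < a := lt_of_le_of_ne inf_le_left fun h => hTt.1 (inf_eq_left.1 h)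
  have h1 : a ⊓ t = lcov a := le_antisymm (le_lcov hlt) (le_inf (lcov_lt haj).le h't)
  have h2 : a ⊓ t ⋖ a := by rw [h1]; exact lcov_covBy haj
  have := hL a t h2
  rw [sup_comm] at this
  exact hTt.2 this

lemma caseF (hL : Semimodular L) {a x y z : L} (hT : Tp a x) (hxy : x ⋖ y)
    (hya : y ⋖ y ⊔ a) (hxz : x ≤ z) (haz : a ≤ z) (hzlt : z < y ⊔ a) : False := by
  have hyz : ¬ y ≤ z := fun h => hzlt.not_ge (sup_le h haz)
  have hzy : z ⊓ y = x := by
    rcases hxy.eq_or_eq (le_inf hxz hxy.lt.le) inf_le_right with h | h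
    · exact h
    · exact absurd (inf_eq_right.1 h) hyz
  have hxa : x < x ⊔ a := left_lt_sup.2 hT.1
  obtain ⟨v, hxv, hv⟩ := exists_covBy_between hxa
  rcases eq_or_lt_of_le hv with rfl | hvlt
  · exact hT.2 hxv
  · have hvz : v ≤ z := hv.trans (sup_le hxz haz)
    have hyv : ¬ y ≤ v := fun h => hyz (h.trans hvz)
    have h1 : v ⋖ v ⊔ y := star hL hxy hxv.lt.le hyv
    have hvy : ¬ v ≤ y := fun h => hxv.lt.not_ge (by rw [← hzy]; exact le_inf hvz h)
    have hvy_le : v ⊔ y ≤ y ⊔ a := sup_le (hv.trans (sup_le (hxy.lt.le.trans le_sup_left) le_sup_right)) le_sup_left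
    have hy_lt : y < v ⊔ y := right_lt_sup.2 hvy
    rcases hya.eq_or_eq hy_lt.le hvy_le with h | h
    · exact hy_lt.ne' h
    · rw [h] at h1
      rcases eq_or_lt_of_le hvz with rfl | hlt
      · exact hvlt.not_ge (sup_le hxz haz)
      · exact h1.2 hlt hzlt

lemma caseN (hL : Semimodular L) {a x y t : L} (hxy : x ⋖ y) (hya : y ⋖ y ⊔ a)
    (hTt : Tp a t) (hxt : x < t) (hty : t ≤ y ⊔ a) : False := by
  rcases hxy.eq_or_eq (le_inf hxt.le hxy.lt.le) inf_le_right with h | h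
  · -- t ⊓ y = x
    have hyt : ¬ y ≤ t := fun hh => hxy.lt.ne (by rw [← h, inf_eq_right.2 hh])
    have h1 : t ⋖ t ⊔ y := star hL hxy hxt.le hyt
    have hty' : ¬ t ≤ y := fun hh => hxt.not_ge (by rw [← h]; exact le_inf (le_refl t) hh)
    have h2 : t ⊔ y = y ⊔ a := by
      rcases hya.eq_or_eq (le_sup_right : y ≤ t ⊔ y) (sup_le hty le_sup_left) with hh | hh
      · exact absurd (sup_eq_right.1 hh) hty'
      · exact hh
    rw [h2] at h1
    rcases eq_or_lt_of_le (sup_le hty (le_sup_right : a ≤ y ⊔ a) : t ⊔ a ≤ y ⊔ a) with hh | hh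
    · exact hTt.2 (hh ▸ h1)
    · exact h1.2 (left_lt_sup.2 hTt.1) hh
  · -- t ⊓ y = y, i.e. y ≤ t
    have hyt : y ≤ t := inf_eq_right.1 h
    rcases hya.eq_or_eq hyt hty with hh | hh
    · rw [hh] at hTt; exact hTt.2 hya
    · exact hTt.1 (hh ▸ (le_sup_right : a ≤ y ⊔ a))

end FaigleAux

open FaigleAux

section Main

variable {L : Type*} [CompleteLattice L] [Fintype L]

local notation "Pt" => {x : L // SupIrred x}

/-- the family of principal down-sets of sup-irreducibles -/
def Fam (L : Type*) [CompleteLattice L] : Set (Set {x : L // SupIrred x}) :=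
  {S | ∃ x : L, S = {p | p.1 ≤ x}}

def Tset (a : Pt) : Set (Set Pt) :=
  {X | X ∈ Fam L ∧ a ∉ X ∧ ∀ Y ∈ Fam L, CoversIn (Fam L) X Y → a ∉ Y}

def Nset (a : Pt) : Set (Set Pt) := (fun X => X ∪ {a}) '' Tset a

def Gset (a : Pt) : Set (Set Pt) := Fam L ∪ Nset a

lemma FD_mem_Fam (x : L) : FD x ∈ Fam L := ⟨x, rfl⟩

lemma Fam_shape {X : Set Pt} (h : X ∈ Fam L) : ∃ x : L, X = FD x := h

lemma coversIn_Fam {x z : L} : CoversIn (Fam L) (FD x) (FD z) ↔ x ⋖ z := by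
  constructor
  · rintro ⟨h1, h2⟩
    refine ⟨FD_ssubset_iff.1 h1, fun c hc1 hc2 => ?_⟩
    exact h2 (FD c) (FD_mem_Fam c) ⟨FD_ssubset_iff.2 hc1, FD_ssubset_iff.2 hc2⟩
  · rintro h
    refine ⟨FD_ssubset_iff.2 h.lt, ?_⟩
    rintro Z ⟨w, rfl⟩ ⟨h3, h4⟩
    exact h.2 (FD_ssubset_iff.1 h3) (FD_ssubset_iff.1 h4)

lemma mem_Tset_iff {a : Pt} {x : L} : FD x ∈ Tset a ↔ Tp a.1 x := by
  constructor
  · rintro ⟨-, h2, h3⟩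
    refine ⟨h2, fun hc => ?_⟩
    exact h3 (FD (x ⊔ a.1)) (FD_mem_Fam _) (coversIn_Fam.2 hc) (le_sup_right : a.1 ≤ x ⊔ a.1)
  · rintro ⟨h1, h2⟩
    refine ⟨FD_mem_Fam x, h1, ?_⟩
    rintro Y ⟨z, rfl⟩ hc haz
    have hcov : x ⋖ z := coversIn_Fam.1 hc
    have := cover_eq_sup h1 hcov haz
    exact h2 (this ▸ hcov)

lemma Tset_shape {a : Pt} {X : Set Pt} (h : X ∈ Tset a) : ∃ x : L, X = FD x ∧ Tp a.1 x := by
  obtain ⟨x, rfl⟩ := Fam_shape h.1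
  exact ⟨x, rfl, mem_Tset_iff.1 h⟩

lemma union_mem_Nset {a : Pt} {x : L} (h : Tp a.1 x) : FD x ∪ {a} ∈ Nset a :=
  ⟨FD x, mem_Tset_iff.2 h, rfl⟩

lemma Gset_shape {a : Pt} {X : Set Pt} (h : X ∈ Gset a) :
    (∃ x : L, X = FD x) ∨ (∃ x : L, X = FD x ∪ {a} ∧ Tp a.1 x) := by
  rcases h with h | ⟨W, hW, rfl⟩
  · exact Or.inl (Fam_shape h)
  · obtain ⟨x, rfl, hx⟩ := Tset_shape hW
    exact Or.inr ⟨x, rfl, hx⟩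

lemma a_mem_union {a : Pt} {X : Set Pt} : a ∈ X ∪ ({a} : Set Pt) := Or.inr rfl

lemma subset_of_subset_union {a : Pt} {S : Set Pt} {x : L} (h : S ⊆ FD x ∪ {a})
    (han : a ∉ S) : S ⊆ FD x := fun p hp => by
  rcases h hp with h1 | h1
  · exact h1
  · rw [Set.mem_singleton_iff] at h1; subst h1; exact absurd hp han

lemma a_notmem_FD {a : Pt} {x : L} (h : ¬ a.1 ≤ x) : a ∉ FD x := h

lemma inter_union_left {a : Pt} {x y : L} (hay : a.1 ≤ y) :
    (FD x ∪ {a}) ∩ FD y = FD (x ⊓ y) ∪ {a} := by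
  ext p
  by_cases hp : p = a
  · subst hp
    simp [mem_FD, hay]
  · simp only [Set.mem_inter_iff, Set.mem_union, Set.mem_singleton_iff, hp, or_false,
      mem_FD, le_inf_iff]

lemma inter_union_left' {a : Pt} {x y : L} (hay : ¬ a.1 ≤ y) :
    (FD x ∪ {a}) ∩ FD y = FD (x ⊓ y) := by
  ext p
  by_cases hp : p = a
  · subst hp
    simp [mem_FD, hay]
  · simp only [Set.mem_inter_iff, Set.mem_union, Set.mem_singleton_iff, hp, or_false,
      mem_FD, le_inf_iff]

lemma inter_union_union {a : Pt} {x y : L} :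
    (FD x ∪ {a}) ∩ (FD y ∪ {a}) = FD (x ⊓ y) ∪ {a} := by
  ext p
  by_cases hp : p = a
  · subst hp; simp
  · simp only [Set.mem_inter_iff, Set.mem_union, Set.mem_singleton_iff, hp, or_false,
      mem_FD, le_inf_iff]

lemma no_between_union {a : Pt} {X Z : Set Pt} (h1 : X ⊂ Z) (h2 : Z ⊂ X ∪ {a}) : False := by
  obtain ⟨q, hq1, hq2⟩ := Set.exists_of_ssubset h1
  have hqa : q = a := by
    rcases h2.subset hq1 with h | h
    · exact absurd h hq2
    · exact h
  subst hqa
  exact h2.not_subset fun p hp => by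
    rcases hp with hp | hp
    · exact h1.subset hp
    · rw [Set.mem_singleton_iff] at hp; subst hp; exact hq1

lemma not_a_lt {a : Pt} (ha : ¬ IsAtom a.1)
    (hamax : ∀ b : Pt, ¬ IsAtom b.1 → ¬ a < b) (p : Pt) : ¬ a.1 < p.1 := by
  intro h
  have hp : ¬ IsAtom p.1 := fun hat => a.2.ne_bot (hat.2 a.1 h)
  exact hamax p hp (Subtype.coe_lt_coe.1 h)

lemma Tp_bot {a : Pt} (ha : ¬ IsAtom a.1) : Tp a.1 (⊥ : L) := by
  constructor
  · exact fun h => a.2.ne_bot (le_bot_iff.1 h)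
  · intro hc
    rw [bot_sup_eq] at hc
    exact ha (bot_covBy_iff.1 hc)

lemma leQ_eq_FD {a : Pt} (ha : ¬ IsAtom a.1)
    (hamax : ∀ b : Pt, ¬ IsAtom b.1 → ¬ a < b) {u : Pt} (hu : u ≠ a) :
    {x : Pt | leQ a x u} = FD u.1 := by
  ext p
  simp only [Set.mem_setOf_eq, leQ, mem_FD]
  constructor
  · rintro (rfl | ⟨hlt, -, -⟩)
    · exact le_refl _
    · exact (Subtype.coe_lt_coe.2 hlt).le
  · intro hp
    rcases eq_or_lt_of_le hp with he | hlt
    · exact Or.inl (Subtype.ext he)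
    · refine Or.inr ⟨Subtype.coe_lt_coe.1 hlt, ?_, hu⟩
      rintro rfl
      exact not_a_lt ha hamax u hlt

lemma leQ_behead_eq_FD {a : Pt} (ha : ¬ IsAtom a.1)
    (hamax : ∀ b : Pt, ¬ IsAtom b.1 → ¬ a < b) {u : Pt} (hu : u ≠ a) :
    {x : Pt | leQ a x u ∧ x ≠ u} = FD (lcov u.1) := by
  ext p
  simp only [Set.mem_setOf_eq, leQ, mem_FD]
  constructor
  · rintro ⟨rfl | ⟨hlt, -, -⟩, hne⟩
    · exact absurd rfl hne
    · exact le_lcov (Subtype.coe_lt_coe.2 hlt)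
  · intro hp
    have hlt : p.1 < u.1 := lt_of_le_of_lt hp (lcov_lt u.2)
    have hpa : p ≠ a := by rintro rfl; exact not_a_lt ha hamax u hlt
    refine ⟨Or.inr ⟨Subtype.coe_lt_coe.1 hlt, hpa, hu⟩, ?_⟩
    rintro rfl
    exact lt_irrefl _ hlt

lemma leQ_a_eq {a : Pt} : {x : Pt | leQ a x a} = (∅ : Set Pt) ∪ {a} := by
  ext p
  simp only [Set.mem_setOf_eq, leQ, Set.empty_union, Set.mem_singleton_iff]
  constructor
  · rintro (rfl | ⟨-, -, hne⟩)
    · rfl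
    · exact absurd rfl hne
  · rintro rfl; exact Or.inl rfl

lemma leQ_a_behead_eq {a : Pt} : {x : Pt | leQ a x a ∧ x ≠ a} = (∅ : Set Pt) := by
  ext p
  simp only [Set.mem_setOf_eq, leQ, Set.mem_empty_iff_false, iff_false, not_and]
  rintro (rfl | ⟨-, -, hne⟩)
  · exact fun h => h rfl
  · exact absurd rfl hne

/-- key semimodularity step in (CP) -/
lemma cp_cover (hL : Semimodular L) {u : Pt} {x : L} (hlx : lcov u.1 ≤ x)
    (hux : ¬ u.1 ≤ x) : x ⋖ x ⊔ u.1 := by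
  have hlt : u.1 ⊓ x < u.1 := lt_of_le_of_ne inf_le_left fun h => hux (inf_eq_left.1 h)
  have h1 : u.1 ⊓ x = lcov u.1 := le_antisymm (le_lcov hlt) (le_inf (lcov_lt u.2).le hlx)
  have h2 : u.1 ⊓ x ⋖ u.1 := by rw [h1]; exact lcov_covBy u.2
  have := hL u.1 x h2
  rwa [sup_comm] at this

end Main

/-- Making a join-irreducible element `a` into an atom: for a finite semimodular
lattice `L` with associated Faigle geometry `(P, F) = Geom L`, `a` a maximal element
of `Jir L \ At L`, the modified order `Q` (dropping all comparabilities involving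
`a`) together with `G := F ∪ N`, where
`T := {X ∈ F : a ∉ X and no cover of X in F contains a}` and
`N := {X ∪ {a} : X ∈ T}`, forms a Faigle geometry `(Q, G)`. -/
theorem extended_geometry_isFaigle (L : Type*) [CompleteLattice L] [Fintype L]
    (hL : Semimodular L)
    (a : {x : L // SupIrred x})
    (ha : ¬ IsAtom a.1)
    (hamax : ∀ b : {x : L // SupIrred x}, ¬ IsAtom b.1 → ¬ a < b) :
    letI P := {x : L // SupIrred x}
    letI F : Set (Set P) := {S | ∃ x : L, S = {p | p.1 ≤ x}}
    letI T : Set (Set P) :=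
      {X | X ∈ F ∧ a ∉ X ∧ ∀ Y ∈ F, CoversIn F X Y → a ∉ Y}
    letI N : Set (Set P) := (fun X => X ∪ {a}) '' T
    letI G : Set (Set P) := F ∪ N
    -- (F∩): `G` contains the top and is intersection-closed
    (Set.univ ∈ G ∧ ∀ X ∈ G, ∀ Y ∈ G, X ∩ Y ∈ G) ∧
    -- (F↓): all members of `G` are down-sets with respect to `≤_Q`
    (∀ X ∈ G, QDownSet a X) ∧
    -- (Pr): `∅`, all `Q`-principal down-sets and their beheaded versions are in `G`
    ((∅ : Set P) ∈ G ∧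
      ∀ u : P, {x | leQ a x u} ∈ G ∧ {x | leQ a x u ∧ x ≠ u} ∈ G) ∧
    -- (CP): the covering property with respect to `Q`
    (∀ u : P, ∀ X ∈ G, u ∉ X → {x | leQ a x u ∧ x ≠ u} ⊆ X →
      ∃ Y ∈ G, u ∈ Y ∧ CoversIn G X Y) := by
  classical
  show (Set.univ ∈ Gset a ∧ ∀ X ∈ Gset a, ∀ Y ∈ Gset a, X ∩ Y ∈ Gset a) ∧
    (∀ X ∈ Gset a, QDownSet a X) ∧
    ((∅ : Set _) ∈ Gset a ∧
      ∀ u, {x | leQ a x u} ∈ Gset a ∧ {x | leQ a x u ∧ x ≠ u} ∈ Gset a) ∧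
    (∀ u, ∀ X ∈ Gset a, u ∉ X → {x | leQ a x u ∧ x ≠ u} ⊆ X →
      ∃ Y ∈ Gset a, u ∈ Y ∧ CoversIn (Gset a) X Y)
  refine ⟨⟨?_, ?_⟩, ?_, ⟨?_, ?_⟩, ?_⟩
  · -- univ ∈ G
    exact Or.inl ⟨⊤, by ext p; simp⟩
  · -- intersection-closed
    intro X hX Y hY
    rcases Gset_shape hX with ⟨x, rfl⟩ | ⟨x, rfl, hTx⟩ <;>
      rcases Gset_shape hY with ⟨y, rfl⟩ | ⟨y, rfl, hTy⟩
    · rw [FD_inter]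
      exact Or.inl (FD_mem_Fam (x ⊓ y))
    · -- FD x ∩ (FD y ∪ {a})
      rw [Set.inter_comm]
      by_cases hax : a.1 ≤ x
      · rw [inter_union_left hax]
        exact Or.inr (union_mem_Nset (hTy.inf_right hL x))
      · rw [inter_union_left' hax]
        exact Or.inl (FD_mem_Fam _)
    · by_cases hay : a.1 ≤ y
      · rw [inter_union_left hay]
        exact Or.inr (union_mem_Nset (hTx.inf_right hL y))
      · rw [inter_union_left' hay]
        exact Or.inl (FD_mem_Fam _)
    · rw [inter_union_union]
      exact Or.inr (union_mem_Nset (hTx.inf_right hL y))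
  · -- down-sets
    intro X hX
    rcases Gset_shape hX with ⟨x, rfl⟩ | ⟨x, rfl, hTx⟩
    · intro p hp q hq
      rcases hq with rfl | ⟨hlt, -, -⟩
      · exact hp
      · exact le_trans (Subtype.coe_lt_coe.2 hlt).le hp
    · intro p hp q hq
      rcases hp with hp | hp
      · rcases hq with rfl | ⟨hlt, -, -⟩
        · exact Or.inl hp
        · exact Or.inl (le_trans (Subtype.coe_lt_coe.2 hlt).le hp)
      · rw [Set.mem_singleton_iff] at hp; subst hp
        rcases hq with rfl | ⟨-, -, hne⟩
        · exact Or.inr rfl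
        · exact absurd rfl hne
  · -- ∅ ∈ G
    exact Or.inl ⟨⊥, by
      ext p
      simp only [Set.mem_empty_iff_false, Set.mem_setOf_eq, le_bot_iff, false_iff]
      exact p.2.ne_bot⟩
  · -- principal down-sets
    intro u
    by_cases hu : u = a
    · subst hu
      constructor
      · rw [leQ_a_eq]
        exact Or.inr ⟨∅, by rw [← FD_bot]; exact mem_Tset_iff.2 (Tp_bot ha), rfl⟩
      · rw [leQ_a_behead_eq]
        exact Or.inl ⟨⊥, by
          ext p
          simp only [Set.mem_empty_iff_false, Set.mem_setOf_eq, le_bot_iff, false_iff]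
          exact p.2.ne_bot⟩
    · constructor
      · rw [leQ_eq_FD ha hamax hu]
        exact Or.inl (FD_mem_Fam _)
      · rw [leQ_behead_eq_FD ha hamax hu]
        exact Or.inl (FD_mem_Fam _)
  · -- (CP)
    intro u X hX hu hsub
    by_cases hua : u = a
    · -- u = a; `subst` eliminates `a`, replacing it by `u`
      subst hua
      rcases Gset_shape hX with ⟨x, rfl⟩ | ⟨x, rfl, hTx⟩
      swap
      · exact absurd a_mem_union hu
      have hax : ¬ u.1 ≤ x := hu
      by_cases hx : x ⋖ x ⊔ u.1
      · -- Y = FD (x ⊔ u)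
        refine ⟨FD (x ⊔ u.1), Or.inl (FD_mem_Fam _), le_sup_right, ?_, ?_⟩
        · exact FD_ssubset_iff.2 (left_lt_sup.2 hax)
        · rintro Z hZ ⟨hZ1, hZ2⟩
          rcases Gset_shape hZ with ⟨z, rfl⟩ | ⟨t, rfl, hTt⟩
          · exact hx.2 (FD_ssubset_iff.1 hZ1) (FD_ssubset_iff.1 hZ2)
          · have hxt : x ≤ t := FD_le_of_subset (subset_of_subset_union hZ1.subset hax)
            have hta : t ≤ x ⊔ u.1 := FD_le_of_subset fun p hp => hZ2.subset (Or.inl hp)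
            have htne : t ≠ x ⊔ u.1 := fun h => hTt.1 (h ▸ (le_sup_right : u.1 ≤ x ⊔ u.1))
            rcases eq_or_lt_of_le hxt with rfl | hlt
            · exact hTt.2 hx
            · exact hx.2 hlt (lt_of_le_of_ne hta htne)
      · -- Y = FD x ∪ {u}
        have hTx : Tp u.1 x := ⟨hax, hx⟩
        refine ⟨FD x ∪ {u}, Or.inr (union_mem_Nset hTx), a_mem_union, ?_, ?_⟩
        · exact Set.ssubset_iff_of_subset Set.subset_union_left |>.2 ⟨u, a_mem_union, hu⟩
        · rintro Z hZ ⟨hZ1, hZ2⟩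
          exact no_between_union hZ1 hZ2
    · -- u ≠ a
      rw [leQ_behead_eq_FD ha hamax hua] at hsub
      rcases Gset_shape hX with ⟨x, rfl⟩ | ⟨x, rfl, hTx⟩
      · -- X = FD x ∈ F
        have hux : ¬ u.1 ≤ x := hu
        have hlx : lcov u.1 ≤ x := FD_le_of_subset hsub
        have hxy : x ⋖ x ⊔ u.1 := cp_cover hL hlx hux
        refine ⟨FD (x ⊔ u.1), Or.inl (FD_mem_Fam _), (le_sup_right : u.1 ≤ x ⊔ u.1), ?_, ?_⟩
        · exact FD_ssubset_iff.2 hxy.lt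
        · rintro Z hZ ⟨hZ1, hZ2⟩
          rcases Gset_shape hZ with ⟨z, rfl⟩ | ⟨t, rfl, hTt⟩
          · exact hxy.2 (FD_ssubset_iff.1 hZ1) (FD_ssubset_iff.1 hZ2)
          · -- Z = FD t ∪ {a}
            have hay : a.1 ≤ x ⊔ u.1 := hZ2.subset a_mem_union
            by_cases hax : a.1 ≤ x
            · -- a ≤ x: derive lcov a ≤ t, contradiction via covTa
              have h't : lcov a.1 ≤ t := by
                apply FD_le_of_subset
                intro p hp
                have hpa : p.1 < a.1 := lt_of_le_of_lt hp (lcov_lt a.2)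
                have hpx : p ∈ FD x := hpa.le.trans hax
                rcases hZ1.subset hpx with h | h
                · exact h
                · rw [Set.mem_singleton_iff] at h; subst h
                  exact absurd hpa (lt_irrefl _)
              exact covTa hL a.2 hTt h't
            · have hxt : x ≤ t := FD_le_of_subset (subset_of_subset_union hZ1.subset hax)
              have hta : t ≤ x ⊔ u.1 := FD_le_of_subset fun p hp => hZ2.subset (Or.inl hp)
              have htne : t ≠ x ⊔ u.1 := fun h => hTt.1 (h ▸ hay)
              rcases eq_or_lt_of_le hxt with rfl | hlt
              · exact hTt.2 (cover_eq_sup hTt.1 hxy hay ▸ hxy)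
              · exact hxy.2 hlt (lt_of_le_of_ne hta htne)
      · -- X = FD x ∪ {a} ∈ N
        have hux : ¬ u.1 ≤ x := fun h => hu (Or.inl h)
        have hanb : a ∉ FD (lcov u.1) := fun h =>
          not_a_lt ha hamax u (lt_of_le_of_lt h (lcov_lt u.2))
        have hlx : lcov u.1 ≤ x := FD_le_of_subset (subset_of_subset_union hsub hanb)
        have hxy : x ⋖ x ⊔ u.1 := cp_cover hL hlx hux
        have hay : ¬ a.1 ≤ x ⊔ u.1 := fun h => hTx.2 (cover_eq_sup hTx.1 hxy h ▸ hxy)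
        by_cases hyT : x ⊔ u.1 ⋖ (x ⊔ u.1) ⊔ a.1
        · -- Y = FD ((x ⊔ u) ⊔ a)
          refine ⟨FD ((x ⊔ u.1) ⊔ a.1), Or.inl (FD_mem_Fam _),
            ((le_sup_right : u.1 ≤ x ⊔ u.1).trans le_sup_left), ?_, ?_⟩
          · refine Set.ssubset_iff_of_subset ?_ |>.2
              ⟨u, ((le_sup_right : u.1 ≤ x ⊔ u.1).trans le_sup_left), hu⟩
            rintro p (hp | hp)
            · exact hp.trans ((le_sup_left : x ≤ x ⊔ u.1).trans le_sup_left)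
            · rw [Set.mem_singleton_iff] at hp; rw [hp]
              exact (le_sup_right : a.1 ≤ (x ⊔ u.1) ⊔ a.1)
          · rintro Z hZ ⟨hZ1, hZ2⟩
            rcases Gset_shape hZ with ⟨z, rfl⟩ | ⟨t, rfl, hTt⟩
            · -- Z = FD z
              have haz : a.1 ≤ z := hZ1.subset a_mem_union
              have hxz : x ≤ z := FD_le_of_subset fun p hp => hZ1.subset (Or.inl hp)
              have hzlt : z < (x ⊔ u.1) ⊔ a.1 := FD_ssubset_iff.1 hZ2
              exact caseF hL hTx hxy hyT hxz haz hzlt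
            · -- Z = FD t ∪ {a}
              have hxt : x ≤ t := by
                apply FD_le_of_subset
                intro p hp
                rcases hZ1.subset (Or.inl hp) with h | h
                · exact h
                · rw [Set.mem_singleton_iff] at h; subst h
                  exact absurd hp hTx.1
              obtain ⟨q, hq1, hq2⟩ := Set.exists_of_ssubset hZ1
              have hqa : q ≠ a := fun h => hq2 (h ▸ a_mem_union)
              have hqt : q ∈ FD t := by
                rcases hq1 with h | h
                · exact h
                · exact absurd h hqa
              have hqx : q ∉ FD x := fun h => hq2 (Or.inl h)
              have hxtlt : x < t := lt_of_le_of_ne hxt fun h => hqx (h ▸ hqt)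
              have hta : t ≤ (x ⊔ u.1) ⊔ a.1 := FD_le_of_subset fun p hp => hZ2.subset (Or.inl hp)
              exact caseN hL hxy hyT hTt hxtlt hta
        · -- Y = FD (x ⊔ u) ∪ {a}
          have hTy : Tp a.1 (x ⊔ u.1) := ⟨hay, hyT⟩
          refine ⟨FD (x ⊔ u.1) ∪ {a}, Or.inr (union_mem_Nset hTy),
            Or.inl (le_sup_right : u.1 ≤ x ⊔ u.1), ?_, ?_⟩
          · refine Set.ssubset_iff_of_subset ?_ |>.2
              ⟨u, Or.inl (le_sup_right : u.1 ≤ x ⊔ u.1), hu⟩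
            rintro p (hp | hp)
            · exact Or.inl (hp.trans (le_sup_left : x ≤ x ⊔ u.1))
            · exact Or.inr hp
          · rintro Z hZ ⟨hZ1, hZ2⟩
            rcases Gset_shape hZ with ⟨z, rfl⟩ | ⟨t, rfl, hTt⟩
            · -- Z = FD z ∈ F
              have haz : a.1 ≤ z := hZ1.subset a_mem_union
              have hxz : x ≤ z := FD_le_of_subset fun p hp => hZ1.subset (Or.inl hp)
              have hwzy : x ≤ z ⊓ (x ⊔ u.1) := le_inf hxz (le_sup_left : x ≤ x ⊔ u.1)
              rcases hxy.eq_or_eq hwzy inf_le_right with h | h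
              · -- z ⊓ y = x : then FD z ⊆ X, contradicting X ⊂ FD z
                obtain ⟨q, hq1, hq2⟩ := Set.exists_of_ssubset hZ1
                have hqa : q ≠ a := fun hh => hq2 (hh ▸ a_mem_union)
                have hqy : q ∈ FD (x ⊔ u.1) ∪ {a} := hZ2.subset hq1
                have hqy' : q.1 ≤ x ⊔ u.1 := by
                  rcases hqy with hh | hh
                  · exact hh
                  · exact absurd hh hqa
                have : q.1 ≤ x := by rw [← h]; exact le_inf hq1 hqy'
                exact hq2 (Or.inl this)
              · -- z ⊓ y = y : y ≤ z, so FD y ∪ {a} ⊆ FD z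
                have hyz : x ⊔ u.1 ≤ z := inf_eq_right.1 h
                refine hZ2.not_subset ?_
                rintro p (hp | hp)
                · exact le_trans hp hyz
                · rw [Set.mem_singleton_iff] at hp; subst hp; exact haz
            · -- Z = FD t ∪ {a} ∈ N
              have hxt : x ≤ t := by
                apply FD_le_of_subset
                intro p hp
                rcases hZ1.subset (Or.inl hp) with h | h
                · exact h
                · rw [Set.mem_singleton_iff] at h; subst h
                  exact absurd hp hTx.1
              obtain ⟨q, hq1, hq2⟩ := Set.exists_of_ssubset hZ1
              have hqa : q ≠ a := fun h => hq2 (h ▸ a_mem_union)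
              have hqt : q ∈ FD t := by
                rcases hq1 with h | h
                · exact h
                · exact absurd h hqa
              have hqx : q ∉ FD x := fun h => hq2 (Or.inl h)
              have hxtlt : x < t := lt_of_le_of_ne hxt fun h => hqx (h ▸ hqt)
              have hty : t ≤ x ⊔ u.1 := by
                apply FD_le_of_subset
                intro p hp
                rcases hZ2.subset (Or.inl hp) with h | h
                · exact h
                · rw [Set.mem_singleton_iff] at h; subst h
                  exact absurd hp hTt.1
              obtain ⟨r, hr1, hr2⟩ := Set.exists_of_ssubset hZ2
              have hra : r ≠ a := fun h => hr2 (h ▸ a_mem_union)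
              have hry : r ∈ FD (x ⊔ u.1) := by
                rcases hr1 with h | h
                · exact h
                · exact absurd h hra
              have hrt : r ∉ FD t := fun h => hr2 (Or.inl h)
              have htylt : t < x ⊔ u.1 := lt_of_le_of_ne hty fun h => hrt (h ▸ hry)
              exact hxy.2 hxtlt htylt
end

section
/- In the setting of extending a Faigle geometry by a new atom: with F a Faigle geometry family on P, a ∈ P, T := {X ∈ F : a ∉ X and no cover of X in F contains a}, N := {X ∪ {a} : X ∈ T}, and G := F ∪ N, one has F ∩ N = ∅; moreover, if X ∈ N ∪ T and Y ∈ G with Y ⊆ X, then Y ∈ N ∪ T, and if furthermore X ∈ T then Y ∈ T. -/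
/-!
Write `T = coverAvoiding F a` for the members `X ∈ F` with `a ∉ X` such that no cover of `X`
contains `a`. The heart of the matter is that `T` is closed downwards inside `F`. Let `Y ⊆ X` with
`X ∈ T`, and suppose some cover `Z` of `Y` contains `a`. Since `a ∉ X`, the covering property
forces `Z ∩ X = Y`. As `X ∈ T`, (CP) shows `⇓a ⊄ X`, so there is a minimal `b < a` outside `X`;
then `⇓b ⊆ Z ∩ X = Y`, and (CP) yields covers `C` of `Y` and `C'` of `X` containing `b`. A cover
is contained in every closed set that meets it outside the set it covers, so `Z ⊆ C ⊆ C'` and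
`a ∈ C'`, contradicting `X ∈ T`. Everything else follows because `W ∪ {a}` covers `W` whenever
`a ∉ W`.
-/

section

open Set

variable {P : Type*} {F : Set (Set P)} {a : P} {X Y : Set P}

def coverAvoiding (F : Set (Set P)) (a : P) : Set (Set P) :=
  {X | X ∈ F ∧ a ∉ X ∧ ∀ Y ∈ F, CoversIn F X Y → a ∉ Y}

lemma coversIn_union_singleton (ha : a ∉ X) :
    CoversIn F X (X ∪ {a}) := by
  refine ⟨ssubset_of_subset_not_subset subset_union_left fun h => ha (h (by simp)), ?_⟩
  rintro Z - ⟨hXZ, hZXa⟩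
  obtain ⟨z, hzZ, hzX⟩ := exists_of_ssubset hXZ
  obtain rfl : z = a := by simpa [hzX] using hZXa.1 hzZ
  exact hZXa.2 (union_subset hXZ.1 (singleton_subset_iff.2 hzZ))

lemma union_singleton_notMem_of_mem_coverAvoiding (hX : X ∈ coverAvoiding F a) : X ∪ {a} ∉ F :=
  fun hXa =>
  hX.2.2 _ hXa (coversIn_union_singleton hX.2.1) (by simp)

namespace CoversIn

variable {Z W C : Set P}

lemma eq_of_subset_of_ssubset (h : CoversIn F Y Z) (hW : W ∈ F) (hYW : Y ⊆ W) (hWZ : W ⊂ Z) :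
    W = Y := by
  by_contra hne
  exact h.2 W hW ⟨hYW.ssubset_of_ne (Ne.symm hne), hWZ⟩

lemma subset_of_ssubset_inter (h : CoversIn F Y Z) (hZC : Z ∩ C ∈ F) (hY : Y ⊂ Z ∩ C) :
    Z ⊆ C := by
  by_contra hZ
  have hlt : Z ∩ C ⊂ Z := inter_subset_left.ssubset_of_ne fun heq => hZ (heq ▸ inter_subset_right)
  exact hY.ne (h.eq_of_subset_of_ssubset hZC hY.1 hlt).symm

end CoversIn

lemma exists_lt_notMem_Iio_subset [PartialOrder P] [WellFoundedLT P] (h : ¬ Iio a ⊆ X) :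
    ∃ b < a, b ∉ X ∧ Iio b ⊆ X := by
  obtain ⟨b, ⟨hba, hbX⟩, hmin⟩ :=
    exists_minimal_of_wellFoundedLT (fun b => b < a ∧ b ∉ X) (not_subset.1 h)
  refine ⟨b, hba, hbX, fun c hcb => ?_⟩
  by_contra hcX
  exact (hmin ⟨hcb.trans hba, hcX⟩ hcb.le).not_gt hcb

section Faigle

variable [PartialOrder P] [Finite P]

lemma IsFaigle.coverAvoiding_of_subset (hF : IsFaigle F) (hX : X ∈ coverAvoiding F a)
    (hYF : Y ∈ F) (hYX : Y ⊆ X) : Y ∈ coverAvoiding F a := by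
  obtain ⟨hXF, hXa, hXcov⟩ := hX
  refine ⟨hYF, fun h => hXa (hYX h), fun Z hZF hYZ haZ => ?_⟩
  have hZX : Z ∩ X = Y := hYZ.eq_of_subset_of_ssubset (hF.inter_mem Z hZF X hXF)
    (subset_inter hYZ.1.1 hYX) (inter_subset_left.ssubset_of_ne fun h => hXa (h ▸ haZ).2)
  have hIio : ¬ Iio a ⊆ X := fun hIio =>
    let ⟨W, hWF, haW, hXW⟩ := hF.cp a X hXF hXa hIio
    hXcov W hWF hXW haW
  obtain ⟨b, hba, hbX, hIiob⟩ := exists_lt_notMem_Iio_subset hIio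
  have hbZ : b ∈ Z := hF.down Z hZF haZ hba.le
  have hbY : b ∉ Y := fun h => hbX (hYX h)
  have hIiobY : Iio b ⊆ Y := fun c hc => hZX ▸ ⟨hF.down Z hZF hbZ hc.le, hIiob hc⟩
  obtain ⟨C, hCF, hbC, hYC⟩ := hF.cp b Y hYF hbY hIiobY
  obtain ⟨C', hC'F, hbC', hXC'⟩ := hF.cp b X hXF hbX hIiob
  have hZC : Z ⊆ C := hYZ.subset_of_ssubset_inter (hF.inter_mem Z hZF C hCF)
    (ssubset_of_subset_not_subset (subset_inter hYZ.1.1 hYC.1.1) fun h => hbY (h ⟨hbZ, hbC⟩))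
  have hCC' : C ⊆ C' := hYC.subset_of_ssubset_inter (hF.inter_mem C hCF C' hC'F)
    (ssubset_of_subset_not_subset (subset_inter hYC.1.1 (hYX.trans hXC'.1.1))
      fun h => hbY (h ⟨hbC, hbC'⟩))
  exact hXcov C' hC'F hXC' (hCC' (hZC haZ))

lemma IsFaigle.coverAvoiding_of_subset_union_singleton (hF : IsFaigle F)
    (hX : X ∈ coverAvoiding F a) (hYF : Y ∈ F) (hYX : Y ⊆ X ∪ {a}) :
    Y ∈ coverAvoiding F a := by
  have haY : a ∉ Y := fun haY => by
    have hYeq : (Y ∩ X) ∪ {a} = Y := subset_antisymm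
      (union_subset inter_subset_left (singleton_subset_iff.2 haY))
      fun y hy => (hYX hy).imp (fun h => ⟨hy, h⟩) id
    have hYX_mem : Y ∩ X ∈ coverAvoiding F a :=
      hF.coverAvoiding_of_subset hX (hF.inter_mem Y hYF X hX.1) inter_subset_right
    exact union_singleton_notMem_of_mem_coverAvoiding hYX_mem (hYeq.symm ▸ hYF)
  exact hF.coverAvoiding_of_subset hX hYF fun y hy =>
    (hYX hy).resolve_right fun h => haY ((mem_singleton_iff.1 h) ▸ hy)

end Faigle

end

theorem extension_family_props_general {P : Type*} [PartialOrder P] [Finite P]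
    {F : Set (Set P)} (hF : IsFaigle F) (a : P) :
    letI T : Set (Set P) :=
      {X | X ∈ F ∧ a ∉ X ∧ ∀ Y ∈ F, CoversIn F X Y → a ∉ Y}
    letI N : Set (Set P) := (fun X => X ∪ {a}) '' T
    letI G : Set (Set P) := F ∪ N
    F ∩ N = ∅ ∧
    (∀ X ∈ N ∪ T, ∀ Y ∈ G, Y ⊆ X → Y ∈ N ∪ T) ∧
    (∀ X ∈ T, ∀ Y ∈ G, Y ⊆ X → Y ∈ T) := by
  have hT : ∀ X ∈ coverAvoiding F a, ∀ Y ∈ F ∪ (· ∪ {a}) '' coverAvoiding F a, Y ⊆ X →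
      Y ∈ coverAvoiding F a := by
    rintro X hX Y (hYF | ⟨W, -, rfl⟩) hYX
    · exact hF.coverAvoiding_of_subset hX hYF hYX
    · exact absurd (hYX (by simp)) hX.2.1
  refine ⟨?_, ?_, hT⟩
  · refine Set.eq_empty_of_forall_notMem ?_
    rintro _ ⟨hXF, X, hX, rfl⟩
    exact union_singleton_notMem_of_mem_coverAvoiding hX hXF
  · rintro X (⟨X₀, hX₀, rfl⟩ | hX) Y hYG hYX
    · rcases hYG with hYF | hYN
      · exact Or.inr (hF.coverAvoiding_of_subset_union_singleton hX₀ hYF hYX)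
      · exact Or.inl hYN
    · exact Or.inr (hT X hX Y hYG hYX)

/-- Properties of the one-point extension family: with
`T := {X ∈ F : a ∉ X and no cover of X in F contains a}`, `N := {X ∪ {a} : X ∈ T}`
and `G := F ∪ N`, one has `F ∩ N = ∅`; moreover any `Y ∈ G` contained in some
`X ∈ N ∪ T` belongs to `N ∪ T`, and even to `T` when `X ∈ T`. -/
theorem extension_family_props {P : Type*} [PartialOrder P] [Finite P]
    {F : Set (Set P)} (hF : IsFaigle F) (a : P) (ha : Set.Iio a ≠ ∅) :
    letI T : Set (Set P) :=
      {X | X ∈ F ∧ a ∉ X ∧ ∀ Y ∈ F, CoversIn F X Y → a ∉ Y}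
    letI N : Set (Set P) := (fun X => X ∪ {a}) '' T
    letI G : Set (Set P) := F ∪ N
    F ∩ N = ∅ ∧
    (∀ X ∈ N ∪ T, ∀ Y ∈ G, Y ⊆ X → Y ∈ N ∪ T) ∧
    (∀ X ∈ T, ∀ Y ∈ G, Y ⊆ X → Y ∈ T) :=
  extension_family_props_general hF a
end

section
/- Let L be a slim semimodular lattice that is not a chain. Then Jir(L) is the union of two disjoint chains A and B, and if the quantity δ(L) := min{|{(c,d) ∈ C×D : c and d are comparable}| : C, D disjoint chains with C ∪ D = Jir(L)} equals 0, then L is slim rectangular; conversely if L is slim rectangular then δ(L) = 0. -/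
/-- A finite lattice is slim if its poset of nonzero join-irreducible elements is the
union of two chains. -/
def Slim (L : Type*) [Lattice L] : Prop :=
  ∃ C D : Set L, IsChain (· ≤ ·) C ∧ IsChain (· ≤ ·) D ∧
    {a : L | SupIrred a} = C ∪ D

/-- A finite semimodular lattice is slim rectangular if its poset of nonzero
join-irreducible elements is the union of two nonempty chains whose elements are
pairwise incomparable across the two chains. -/
def SlimRectangular (L : Type*) [Lattice L] : Prop :=
  Semimodular L ∧
  ∃ C D : Set L, C.Nonempty ∧ D.Nonempty ∧
    IsChain (· ≤ ·) C ∧ IsChain (· ≤ ·) D ∧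
    {a : L | SupIrred a} = C ∪ D ∧
    ∀ c ∈ C, ∀ d ∈ D, ¬(c ≤ d) ∧ ¬(d ≤ c)

/-- The number of comparable cross pairs for a pair of chains `C`, `D`. -/
noncomputable def deltaCD (L : Type*) [Lattice L] (C D : Set L) : ℕ :=
  Nat.card {p : L × L // p.1 ∈ C ∧ p.2 ∈ D ∧ (p.1 ≤ p.2 ∨ p.2 ≤ p.1)}

/-- `δ(L)`: the minimum of `δ_{C,D}` over decompositions of `Jir L` into two disjoint
chains. -/
noncomputable def deltaL (L : Type*) [Lattice L] : ℕ :=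
  sInf {n : ℕ | ∃ C D : Set L, IsChain (· ≤ ·) C ∧ IsChain (· ≤ ·) D ∧
    Disjoint C D ∧ {a : L | SupIrred a} = C ∪ D ∧ n = deltaCD L C D}

lemma chain_univ_of_chain_supIrred (L : Type*) [CompleteLattice L] [Fintype L]
    (h : IsChain (· ≤ ·) {a : L | SupIrred a}) : IsChain (· ≤ ·) (Set.univ : Set L) := by
  have key : ∀ x : L, x = ⊥ ∨ SupIrred x := by
    intro x
    obtain ⟨s, hs, hirr⟩ := exists_supIrred_decomposition x
    rcases s.eq_empty_or_nonempty with rfl | hne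
    · left; simpa using hs.symm
    · right
      have hmem : s.sup' hne id ∈ {a : L | SupIrred a} := by
        apply Finset.sup'_mem
        · intro a ha b hb
          rcases h.total ha hb with hab | hab
          · simpa [sup_eq_right.2 hab] using hb
          · simpa [sup_eq_left.2 hab] using ha
        · intro i hi; exact hirr hi
      rwa [Finset.sup'_eq_sup, hs] at hmem
  intro x _ y _ hxy
  rcases key x with rfl | hx
  · exact Or.inl bot_le
  rcases key y with rfl | hy
  · exact Or.inr bot_le
  exact h hx hy hxy

/-- If `L` is a slim semimodular lattice that is not a chain, then `Jir L` is the
union of two disjoint chains, and `δ(L) = 0` iff `L` is slim rectangular. -/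
theorem slim_delta_zero_iff_rectangular (L : Type*) [CompleteLattice L] [Fintype L]
    (hL : Semimodular L) (hslim : Slim L)
    (hnotchain : ¬ IsChain (· ≤ ·) (Set.univ : Set L)) :
    (∃ A B : Set L, IsChain (· ≤ ·) A ∧ IsChain (· ≤ ·) B ∧ Disjoint A B ∧
      {a : L | SupIrred a} = A ∪ B) ∧
    (deltaL L = 0 ↔ SlimRectangular L) := by

  classical
  obtain ⟨C0, D0, hC0, hD0, hun0⟩ := hslim
  -- disjoint decomposition
  have hdecomp : ∃ A B : Set L, IsChain (· ≤ ·) A ∧ IsChain (· ≤ ·) B ∧ Disjoint A B ∧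
      {a : L | SupIrred a} = A ∪ B := by
    refine ⟨C0, D0 \ C0, hC0, hD0.mono Set.diff_subset, Set.disjoint_sdiff_right, ?_⟩
    rw [hun0, Set.union_diff_self]
  refine ⟨hdecomp, ?_, ?_⟩
  · -- deltaL = 0 → SlimRectangular
    intro hδ
    -- the index set of deltaL is nonempty
    obtain ⟨A, B, hA, hB, hAB, hunAB⟩ := hdecomp
    have hne : {n : ℕ | ∃ C D : Set L, IsChain (· ≤ ·) C ∧ IsChain (· ≤ ·) D ∧
        Disjoint C D ∧ {a : L | SupIrred a} = C ∪ D ∧ n = deltaCD L C D}.Nonempty :=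
      ⟨deltaCD L A B, A, B, hA, hB, hAB, hunAB, rfl⟩
    have hmem := Nat.sInf_mem hne
    rw [show sInf {n : ℕ | ∃ C D : Set L, IsChain (· ≤ ·) C ∧ IsChain (· ≤ ·) D ∧
        Disjoint C D ∧ {a : L | SupIrred a} = C ∪ D ∧ n = deltaCD L C D} = deltaL L from rfl,
      hδ] at hmem
    obtain ⟨C, D, hC, hD, hCD, hun, hzero⟩ := hmem
    have hfin : Finite {p : L × L // p.1 ∈ C ∧ p.2 ∈ D ∧ (p.1 ≤ p.2 ∨ p.2 ≤ p.1)} := by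
      infer_instance
    have hempty : IsEmpty {p : L × L // p.1 ∈ C ∧ p.2 ∈ D ∧ (p.1 ≤ p.2 ∨ p.2 ≤ p.1)} := by
      have := Nat.card_eq_zero.mp hzero.symm
      rcases this with h | h
      · exact h
      · exact absurd h (not_infinite_iff_finite.mpr hfin)
    have hinc : ∀ c ∈ C, ∀ d ∈ D, ¬(c ≤ d) ∧ ¬(d ≤ c) := by
      intro c hc d hd
      constructor
      · intro hle; exact hempty.false ⟨(c, d), hc, hd, Or.inl hle⟩
      · intro hle; exact hempty.false ⟨(c, d), hc, hd, Or.inr hle⟩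
    have hCne : C.Nonempty := by
      rcases C.eq_empty_or_nonempty with rfl | h
      · exfalso
        apply hnotchain
        apply chain_univ_of_chain_supIrred
        rw [hun, Set.empty_union]; exact hD
      · exact h
    have hDne : D.Nonempty := by
      rcases D.eq_empty_or_nonempty with rfl | h
      · exfalso
        apply hnotchain
        apply chain_univ_of_chain_supIrred
        rw [hun, Set.union_empty]; exact hC
      · exact h
    exact ⟨hL, C, D, hCne, hDne, hC, hD, hun, hinc⟩
  · -- SlimRectangular → deltaL = 0
    rintro ⟨-, C, D, hCne, hDne, hC, hD, hun, hinc⟩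
    have hCD : Disjoint C D := by
      rw [Set.disjoint_left]
      intro x hxC hxD
      exact (hinc x hxC x hxD).1 le_rfl
    have hempty : IsEmpty {p : L × L // p.1 ∈ C ∧ p.2 ∈ D ∧ (p.1 ≤ p.2 ∨ p.2 ≤ p.1)} := by
      constructor
      rintro ⟨⟨c, d⟩, hc, hd, hle | hle⟩
      · exact (hinc c hc d hd).1 hle
      · exact (hinc c hc d hd).2 hle
    have hzero : deltaCD L C D = 0 := by
      unfold deltaCD
      exact Nat.card_of_isEmpty
    have : (0 : ℕ) ∈ {n : ℕ | ∃ C D : Set L, IsChain (· ≤ ·) C ∧ IsChain (· ≤ ·) D ∧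
        Disjoint C D ∧ {a : L | SupIrred a} = C ∪ D ∧ n = deltaCD L C D} :=
      ⟨C, D, hC, hD, hCD, hun, hzero.symm⟩
    exact Nat.le_zero.mp (Nat.sInf_le this)
end
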